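/- arXiv:1702.04777 — 7 statements merged into one kernel-verified Lean document; each statement's English description precedes it below -/
import Mathlib

section
/- Fix real constants μ0 > 0 and H > 0, and for each integer n ≥ 1 let k_n = k_n(H) be the unique solution k of μ0 + k·tan(k·H) = 0 in ((2n−1)π/(2H), nπ/H). Then for every n ≥ 1 one has the exact identity k_n·H = nπ − arctan(μ0/k_n); consequently |k_n − nπ/H| ≤ μ0/(H·k_n) ≤ 2μ0/((2n−1)π), so that k_n = nπ/H + O(1/n) as n → ∞. -/
/-!
Since `tan` has period `π` and `arctan` inverts it on `(-π/2, π/2)`, a root `k` of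
`μ0 + k tan (k H) = 0` with `k H` in `((n - 1/2)π, nπ)` satisfies
`k H - nπ = arctan (tan (k H)) = -arctan (μ0 / k)`. The bound `arctan y ≤ y` for `y ≥ 0` then
gives `|k - nπ/H| ≤ μ0 / (H k)`, and the left end of the interval bounds `1 / k` by `O(1/n)`.
-/

open Real Filter Asymptotics

namespace Real

theorem arctan_le_self {x : ℝ} (hx : 0 ≤ x) : arctan x ≤ x := by
  simpa only [tan_arctan] using le_tan (arctan_nonneg.mpr hx) (arctan_lt_pi_div_two x)

theorem sub_nat_mul_pi_eq_arctan_tan {x : ℝ} (n : ℕ) (h₁ : n * π - π / 2 < x)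
    (h₂ : x < n * π + π / 2) : x - n * π = arctan (tan x) := by
  rw [← tan_sub_nat_mul_pi x n, arctan_tan] <;> linarith

theorem eq_nat_mul_pi_sub_arctan_of_add_mul_tan_eq_zero {μ k x : ℝ} (n : ℕ) (hk : k ≠ 0)
    (h : μ + k * tan x = 0) (h₁ : n * π - π / 2 < x) (h₂ : x < n * π + π / 2) :
    x = n * π - arctan (μ / k) := by
  have htan : tan x = -(μ / k) := by
    field_simp
    linarith
  have := sub_nat_mul_pi_eq_arctan_tan n h₁ h₂
  rw [htan, arctan_neg] at this
  linarith

end Real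

section Waveguide

variable {μ H k : ℝ}

theorem pos_of_odd_mul_pi_div_lt (n : ℕ) (hn : 1 ≤ n) (hH : 0 < H)
    (hk : (2 * (n : ℝ) - 1) * π / (2 * H) < k) : 0 < k := by
  have hn' : (1 : ℝ) ≤ n := by exact_mod_cast hn
  exact lt_of_le_of_lt (div_nonneg (mul_nonneg (by linarith) pi_pos.le) (by positivity)) hk

theorem mul_eq_nat_mul_pi_sub_arctan (n : ℕ) (hn : 1 ≤ n) (hH : 0 < H)
    (hk : k ∈ Set.Ioo ((2 * (n : ℝ) - 1) * π / (2 * H)) ((n : ℝ) * π / H))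
    (hroot : μ + k * tan (k * H) = 0) :
    k * H = n * π - arctan (μ / k) := by
  obtain ⟨hlo, hhi⟩ := hk
  refine eq_nat_mul_pi_sub_arctan_of_add_mul_tan_eq_zero n
    (pos_of_odd_mul_pi_div_lt n hn hH hlo).ne' hroot ?_ ?_
  · rw [div_lt_iff₀ (by positivity)] at hlo
    linarith
  · rw [lt_div_iff₀ hH] at hhi
    linarith [pi_pos]

theorem abs_sub_nat_mul_pi_div_le (n : ℕ) (hμ : 0 ≤ μ) (hH : 0 < H) (hk : 0 < k)
    (hkH : k * H = n * π - arctan (μ / k)) :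
    |k - n * π / H| ≤ μ / (H * k) := by
  have hdiff : k - n * π / H = -arctan (μ / k) / H := by
    field_simp
    linarith
  rw [hdiff, abs_div, abs_neg, abs_of_nonneg (arctan_nonneg.mpr (by positivity)),
    abs_of_pos hH, div_le_iff₀ hH]
  calc arctan (μ / k) ≤ μ / k := arctan_le_self (by positivity)
    _ = μ / (H * k) * H := by field_simp

theorem div_mul_le_two_mul_div_of_lt (n : ℕ) (hn : 1 ≤ n) (hμ : 0 ≤ μ) (hH : 0 < H)
    (hk : (2 * (n : ℝ) - 1) * π / (2 * H) < k) :
    μ / (H * k) ≤ 2 * μ / ((2 * (n : ℝ) - 1) * π) := by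
  have hn' : (1 : ℝ) ≤ n := by exact_mod_cast hn
  have hpos : 0 < (2 * (n : ℝ) - 1) * π := mul_pos (by linarith) pi_pos
  have hHk : (2 * (n : ℝ) - 1) * π < 2 * (H * k) := by
    rw [div_lt_iff₀ (by positivity)] at hk
    linarith
  calc μ / (H * k) = 2 * μ / (2 * (H * k)) := by ring
    _ ≤ 2 * μ / ((2 * (n : ℝ) - 1) * π) :=
      div_le_div_of_nonneg_left (by positivity) hpos hHk.le

theorem two_mul_div_le_div_pi_mul_inv (n : ℕ) (hn : 1 ≤ n) (hμ : 0 ≤ μ) :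
    2 * μ / ((2 * (n : ℝ) - 1) * π) ≤ 2 * μ / π * (1 / n) := by
  have hn' : (1 : ℝ) ≤ n := by exact_mod_cast hn
  rw [div_mul_div_comm, mul_one]
  exact div_le_div_of_nonneg_left (by positivity) (by positivity)
    (by nlinarith [pi_pos])

end Waveguide

/-- Asymptotics of the evanescent eigenvalues: `kₙ·H = nπ − arctan(μ₀/kₙ)`, hence
`|kₙ − nπ/H| ≤ μ₀/(H·kₙ) ≤ 2μ₀/((2n−1)π)`, so `kₙ = nπ/H + O(1/n)` (Eq. (2.5a)). -/
theorem eigenvalue_asymptotics (μ0 H : ℝ) (hμ0 : 0 < μ0) (hH : 0 < H) (k : ℕ → ℝ)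
    (hk : ∀ n : ℕ, 1 ≤ n →
      k n ∈ Set.Ioo ((2 * (n : ℝ) - 1) * π / (2 * H)) ((n : ℝ) * π / H) ∧
      μ0 + k n * Real.tan (k n * H) = 0) :
    (∀ n : ℕ, 1 ≤ n →
        k n * H = (n : ℝ) * π - Real.arctan (μ0 / k n) ∧
        |k n - (n : ℝ) * π / H| ≤ μ0 / (H * k n) ∧
        μ0 / (H * k n) ≤ 2 * μ0 / ((2 * (n : ℝ) - 1) * π)) ∧
    (fun n : ℕ => k n - (n : ℝ) * π / H) =O[atTop] (fun n : ℕ => 1 / (n : ℝ)) := by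
  have hbounds : ∀ n : ℕ, 1 ≤ n →
      k n * H = (n : ℝ) * π - Real.arctan (μ0 / k n) ∧
      |k n - (n : ℝ) * π / H| ≤ μ0 / (H * k n) ∧
      μ0 / (H * k n) ≤ 2 * μ0 / ((2 * (n : ℝ) - 1) * π) := by
    intro n hn
    obtain ⟨hmem, hroot⟩ := hk n hn
    have hkH := mul_eq_nat_mul_pi_sub_arctan n hn hH hmem hroot
    have hkpos := pos_of_odd_mul_pi_div_lt n hn hH hmem.1
    exact ⟨hkH, abs_sub_nat_mul_pi_div_le n hμ0.le hH hkpos hkH,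
      div_mul_le_two_mul_div_of_lt n hn hμ0.le hH hmem.1⟩
  refine ⟨hbounds, .of_bound (2 * μ0 / π) ?_⟩
  filter_upwards [eventually_ge_atTop 1] with n hn
  rw [Real.norm_eq_abs, Real.norm_eq_abs, abs_of_nonneg (by positivity : (0 : ℝ) ≤ 1 / n)]
  obtain ⟨-, habs, hle⟩ := hbounds n hn
  exact habs.trans (hle.trans (two_mul_div_le_div_pi_mul_inv n hn hμ0.le))
end

section
/- Fix real constants μ0 > 0 and H > 0, and real numbers h, η with η + h = H. With k_0 the unique positive solution of μ0 = k·tanh(k·H), k_n (n ≥ 1) the unique solution of μ0 + k·tan(k·H) = 0 in ((2n−1)π/(2H), nπ/H), Z_0(z) = cosh(k_0(z+h))/cosh(k_0 H) and Z_n(z) = cos(k_n(z+h))/cos(k_n H) for n ≥ 1, the linear span of the family {Z_n : n ≥ 0} is dense in the Lebesgue space L²((−h, η)); that is, {Z_n}_{n≥0} is a complete orthogonal system in L²(−h, η). -/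
open Real MeasureTheory

/-!
The modes `Zₙ` are eigenfunctions of `-d²/dz²` on `[-h, η]` with `Z' = 0` at `z = -h` and the
Robin condition `Z' = μ0 Z` at `z = η`, for the distinct eigenvalues `-k₀², k₁², k₂², …`, so
they are pairwise orthogonal; likewise the Neumann cosines `cos (mπ(z + h)/H)` are orthogonal,
and by Stone–Weierstrass they span a dense subspace of `L²(-h, η)`. Since `0 < nπ - kₙH < μ0/kₙ`,
the `n`-th mode, scaled like the `n`-th normalised cosine, is `O(1/n)` away from it in `L²`.
These distances are square-summable, and an orthogonal family that is square-summably close to a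
Hilbert basis is complete (a finite-dimensional counting argument, due to Bari).
-/

open Submodule Set Filter

open scoped InnerProductSpace

section Bari

variable {𝕜 E : Type*} [RCLike 𝕜] [NormedAddCommGroup E] [InnerProductSpace 𝕜 E]

theorem HilbertBasis.hasSum_norm_inner_sq (v : HilbertBasis ℕ 𝕜 E) (f : E) :
    HasSum (fun i => ‖⟪v i, f⟫_𝕜‖ ^ 2) (‖f‖ ^ 2) := by
  simpa [v.repr_apply_apply, Real.rpow_two] using lp.hasSum_norm (p := 2) (by norm_num) (v.repr f)

theorem HilbertBasis.eq_zero_of_tsum_norm_sub_sq_lt_one (v : HilbertBasis ℕ 𝕜 E) (φ : ℕ → E)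
    (N : ℕ) (hsum : Summable fun j => ‖v (j + N) - φ (j + N)‖ ^ 2)
    (hlt : ∑' j, ‖v (j + N) - φ (j + N)‖ ^ 2 < 1) {f : E}
    (hv : ∀ i < N, ⟪v i, f⟫_𝕜 = 0) (hφ : ∀ i, N ≤ i → ⟪φ i, f⟫_𝕜 = 0) : f = 0 := by
  have hparseval : HasSum (fun j => ‖⟪v (j + N), f⟫_𝕜‖ ^ 2) (‖f‖ ^ 2) := by
    have := (hasSum_nat_add_iff' N).mpr (v.hasSum_norm_inner_sq f)
    rwa [Finset.sum_eq_zero fun i hi => by simp [hv i (Finset.mem_range.mp hi)], sub_zero] at this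
  have htail (j : ℕ) : ‖⟪v (j + N), f⟫_𝕜‖ ^ 2 ≤ ‖v (j + N) - φ (j + N)‖ ^ 2 * ‖f‖ ^ 2 := by
    rw [← mul_pow, ← sub_zero ⟪v (j + N), f⟫_𝕜, ← hφ (j + N) (by omega), ← inner_sub_left]
    gcongr
    exact norm_inner_le_norm _ _
  have hle := hasSum_le htail hparseval (hsum.hasSum.mul_right (‖f‖ ^ 2))
  have : ‖f‖ ^ 2 ≤ 0 := by nlinarith [sq_nonneg ‖f‖]
  simpa using this

theorem HilbertBasis.dense_span_of_summable_norm_sub_sq [CompleteSpace E]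
    (v : HilbertBasis ℕ 𝕜 E) {φ : ℕ → E} (hφ0 : ∀ i, φ i ≠ 0)
    (hφ : Pairwise fun i j => ⟪φ i, φ j⟫_𝕜 = 0) (hsum : Summable fun i => ‖v i - φ i‖ ^ 2) :
    Dense (span 𝕜 (range φ) : Set E) := by
  obtain ⟨N, hN⟩ := ((tendsto_sum_nat_add fun i => ‖v i - φ i‖ ^ 2).eventually
    (gt_mem_nhds one_pos)).exists
  rw [dense_iff_topologicalClosure_eq_top, topologicalClosure_eq_top_iff, eq_bot_iff]
  intro g hg
  by_contra hg0
  -- `φ 0, …, φ (N - 1), g` are `N + 1` independent vectors orthogonal to every `φ i`, `i ≥ N`,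
  -- so the `N` coordinates `⟪v i, ·⟫`, `i < N`, would be injective on their span.
  have hg_notMem : g ∉ span 𝕜 (range fun i : Fin N => φ i) := fun hmem =>
    hg0 (inner_self_eq_zero.mp (inner_right_of_mem_orthogonal
      (span_mono (range_comp_subset_range _ φ) hmem) hg))
  let ψ : Fin (N + 1) → E := Fin.snoc (fun i : Fin N => φ i) g
  have hψ : LinearIndependent 𝕜 ψ := linearIndependent_finSnoc.mpr
    ⟨(linearIndependent_of_ne_zero_of_inner_eq_zero hφ0 hφ).comp _ Fin.val_injective, hg_notMem⟩
  have hψ_perp (i : ℕ) (hi : N ≤ i) : span 𝕜 (range ψ) ≤ (𝕜 ∙ φ i)ᗮ := by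
    rw [span_le, range_subset_iff]
    refine Fin.lastCases ?_ fun j => ?_
    · simpa [ψ, mem_orthogonal_singleton_iff_inner_right] using
        inner_right_of_mem_orthogonal (subset_span (mem_range_self i)) hg
    · simpa [ψ, mem_orthogonal_singleton_iff_inner_right] using hφ (by omega : i ≠ j)
  let T : E →ₗ[𝕜] Fin N → 𝕜 := LinearMap.pi fun i => (innerSL 𝕜 (v i) : E →L[𝕜] 𝕜)
  have hTψ : LinearIndependent 𝕜 (T ∘ ψ) := hψ.map <| by
    rw [disjoint_def]
    intro x hx hTx
    exact v.eq_zero_of_tsum_norm_sub_sq_lt_one φ N ((summable_nat_add_iff N).mpr hsum) hN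
      (fun i hi => congrFun hTx ⟨i, hi⟩)
      fun i hi => mem_orthogonal_singleton_iff_inner_right.mp (hψ_perp i hi hx)
  simpa using hTψ.fintype_card_le_finrank

end Bari

theorem orthonormal_inv_norm_smul {ι E : Type*} [NormedAddCommGroup E] [InnerProductSpace ℝ E]
    {v : ι → E} (hv0 : ∀ i, v i ≠ 0) (hv : Pairwise fun i j => ⟪v i, v j⟫_ℝ = 0) :
    Orthonormal ℝ fun i => ‖v i‖⁻¹ • v i :=
  ⟨fun i => norm_smul_inv_norm (hv0 i), fun i j hij => by
    simp [real_inner_smul_left, real_inner_smul_right, hv hij]⟩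

namespace ContinuousMap

variable {a b : ℝ}

theorem memLp_restrict_Ioo (f : C(ℝ, ℝ)) : MemLp f 2 (volume.restrict (Ioo a b)) := by
  obtain ⟨C, hC⟩ := (isCompact_Icc : IsCompact (Icc a b)).exists_bound_of_continuousOn
    f.continuous.continuousOn
  exact MemLp.of_bound f.continuous.aestronglyMeasurable C <|
    (ae_restrict_iff' measurableSet_Ioo).mpr (ae_of_all _ fun x hx => hC x (Ioo_subset_Icc_self hx))

variable (a b) in
noncomputable def toLpIoo : C(ℝ, ℝ) →ₗ[ℝ] Lp ℝ 2 (volume.restrict (Ioo a b)) where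
  toFun f := f.memLp_restrict_Ioo.toLp f
  map_add' f g := MemLp.toLp_add f.memLp_restrict_Ioo g.memLp_restrict_Ioo
  map_smul' c f := MemLp.toLp_const_smul c f.memLp_restrict_Ioo

theorem coeFn_toLpIoo (f : C(ℝ, ℝ)) : toLpIoo a b f =ᵐ[volume.restrict (Ioo a b)] f :=
  MemLp.coeFn_toLp f.memLp_restrict_Ioo

theorem inner_toLpIoo (hab : a ≤ b) (f g : C(ℝ, ℝ)) :
    ⟪toLpIoo a b f, toLpIoo a b g⟫_ℝ = ∫ x in a..b, f x * g x := by
  rw [L2.inner_def, intervalIntegral.integral_of_le hab, integral_Ioc_eq_integral_Ioo]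
  refine integral_congr_ae ?_
  filter_upwards [coeFn_toLpIoo f, coeFn_toLpIoo g] with x hf hg
  simp [hf, hg, mul_comm]

theorem norm_toLpIoo_le (hab : a ≤ b) {f : C(ℝ, ℝ)} {C : ℝ} (hC0 : 0 ≤ C)
    (hC : ∀ x ∈ Ioo a b, |f x| ≤ C) : ‖toLpIoo a b f‖ ≤ √(b - a) * C := by
  have hbound : ∀ᵐ x ∂volume.restrict (Ioo a b), ‖toLpIoo a b f x‖ ≤ C := by
    filter_upwards [coeFn_toLpIoo f, ae_restrict_mem measurableSet_Ioo] with x hx hmem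
    rw [hx, Real.norm_eq_abs]
    exact hC x hmem
  convert Lp.norm_le_of_ae_bound hC0 hbound using 2
  simp only [measureUnivNNReal, Measure.restrict_apply_univ, Real.volume_Ioo,
    ENNReal.coe_toNNReal_eq_toReal, ENNReal.toReal_ofReal (sub_nonneg.2 hab), Real.sqrt_eq_rpow]
  norm_num

theorem toLpIoo_ne_zero (hab : a < b) {f : C(ℝ, ℝ)} {x : ℝ} (hx : x ∈ Icc a b)
    (hfx : f x ≠ 0) : toLpIoo a b f ≠ 0 := by
  intro h0
  have hae : (f : ℝ → ℝ) =ᵐ[volume.restrict (Ioo a b)] 0 :=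
    (coeFn_toLpIoo f).symm.trans (h0 ▸ Lp.coeFn_zero _ _ _)
  have hIoo := Measure.eqOn_open_of_ae_eq hae isOpen_Ioo f.continuous.continuousOn
    continuousOn_const
  exact hfx (hIoo.of_subset_closure f.continuous.continuousOn continuousOn_const
    Ioo_subset_Icc_self (by rw [closure_Ioo hab.ne]) hx)

theorem toLpIoo_mem_span_of_eq_mul {f : C(ℝ, ℝ)} {g : ℝ → ℝ} {r : ℝ} (hr : r ≠ 0)
    (hfg : ∀ x, f x = r * g x) :
    toLpIoo a b f ∈ span ℝ {F : Lp ℝ 2 (volume.restrict (Ioo a b)) |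
      (F : ℝ → ℝ) =ᵐ[volume.restrict (Ioo a b)] g} := by
  rw [← smul_inv_smul₀ hr (toLpIoo a b f)]
  refine smul_mem _ _ (subset_span ?_)
  filter_upwards [Lp.coeFn_smul r⁻¹ (toLpIoo a b f), coeFn_toLpIoo f] with x h1 h2
  rw [h1, Pi.smul_apply, h2, hfg, smul_eq_mul, inv_mul_cancel_left₀ hr]

theorem dense_span_image_toLpIoo (hab : a ≤ b) {S : Set C(ℝ, ℝ)}
    (hS : ∀ u : C(ℝ, ℝ), ∀ ε > 0, ∃ p ∈ span ℝ S, ∀ x ∈ Ioo a b, |u x - p x| < ε) :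
    Dense (span ℝ (toLpIoo a b '' S) : Set (Lp ℝ 2 (volume.restrict (Ioo a b)))) := by
  refine (Lp.boundedContinuousFunction_dense ℝ _ (p := 2) (by norm_num)).mono
    (fun x hx => ?_) |>.of_closure
  obtain ⟨w, hw⟩ := Lp.mem_boundedContinuousFunction_iff.mp hx
  have hxw : x = toLpIoo a b w.toContinuousMap := by
    refine Lp.ext (EventuallyEq.trans ?_ (coeFn_toLpIoo _).symm)
    have : (x : ℝ → ℝ) = (w.toContinuousMap.toAEEqFun (volume.restrict (Ioo a b)) : ℝ → ℝ) := by
      rw [hw]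
    exact this ▸ coeFn_toAEEqFun _ _
  rw [hxw, Metric.mem_closure_iff]
  intro ε hε
  obtain ⟨p, hp, hclose⟩ := hS w.toContinuousMap (ε / (√(b - a) + 1)) (by positivity)
  refine ⟨toLpIoo a b p, span_image (toLpIoo a b) ▸ mem_map_of_mem hp, ?_⟩
  rw [dist_eq_norm, ← map_sub]
  calc ‖toLpIoo a b (w.toContinuousMap - p)‖ ≤ √(b - a) * (ε / (√(b - a) + 1)) :=
        norm_toLpIoo_le hab (by positivity) fun x hx => (hclose x hx).le
    _ < ε := by
        rw [← mul_div_assoc, div_lt_iff₀ (by positivity)]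
        nlinarith [Real.sqrt_nonneg (b - a)]

end ContinuousMap

def IsRobinEigenfunction (a b σ ν : ℝ) (f : ℝ → ℝ) : Prop :=
  ∃ f' : ℝ → ℝ, (∀ x, HasDerivAt f (f' x) x) ∧ (∀ x, HasDerivAt f' (-(ν * f x)) x) ∧
    f' a = 0 ∧ f' b = σ * f b

section Robin

variable {a b σ : ℝ}

theorem IsRobinEigenfunction.integral_mul_eq_zero {ν₁ ν₂ : ℝ} {f g : ℝ → ℝ}
    (hf : IsRobinEigenfunction a b σ ν₁ f) (hg : IsRobinEigenfunction a b σ ν₂ g)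
    (hν : ν₁ ≠ ν₂) : ∫ x in a..b, f x * g x = 0 := by
  obtain ⟨f', hf, hf', hfa, hfb⟩ := hf
  obtain ⟨g', hg, hg', hga, hgb⟩ := hg
  have hcont : Continuous fun x => f x * g x :=
    (continuous_iff_continuousAt.mpr fun x => (hf x).continuousAt).mul
      (continuous_iff_continuousAt.mpr fun x => (hg x).continuousAt)
  -- The Wronskian `f' g - f g'` has derivative `(ν₂ - ν₁) f g` and vanishes at both ends.
  have hW : ∀ x ∈ uIcc a b, HasDerivAt (fun x => f' x * g x - f x * g' x)
      ((ν₂ - ν₁) * (f x * g x)) x := fun x _ =>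
    (((hf' x).mul (hg x)).sub ((hf x).mul (hg' x))).congr_deriv (by ring)
  have := intervalIntegral.integral_eq_sub_of_hasDerivAt hW
    ((continuous_const.mul hcont).intervalIntegrable _ _)
  rw [intervalIntegral.integral_const_mul, hfa, hgb, hga, hfb] at this
  simpa [sub_ne_zero.mpr hν.symm, mul_comm, mul_left_comm] using this

theorem isRobinEigenfunction_cos {k : ℝ}
    (hk : k * sin (k * (b - a)) = -(σ * cos (k * (b - a)))) :
    IsRobinEigenfunction a b σ (k ^ 2) fun x => cos (k * (x - a)) := by
  have hlin (x : ℝ) : HasDerivAt (fun x => k * (x - a)) k x := by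
    simpa using ((hasDerivAt_id x).sub_const a).const_mul k
  refine ⟨fun x => -(k * sin (k * (x - a))), fun x => ((hlin x).cos).congr_deriv (by ring),
    fun x => (((hlin x).sin).const_mul k).neg.congr_deriv (by ring), by simp, ?_⟩
  simp only
  linarith

theorem isRobinEigenfunction_cosh {k : ℝ}
    (hk : k * sinh (k * (b - a)) = σ * cosh (k * (b - a))) :
    IsRobinEigenfunction a b σ (-k ^ 2) fun x => cosh (k * (x - a)) := by
  have hlin (x : ℝ) : HasDerivAt (fun x => k * (x - a)) k x := by
    simpa using ((hasDerivAt_id x).sub_const a).const_mul k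
  exact ⟨fun x => k * sinh (k * (x - a)), fun x => ((hlin x).cosh).congr_deriv (by ring),
    fun x => (((hlin x).sinh).const_mul k).congr_deriv (by ring), by simp, hk⟩

end Robin

section NeumannCos

variable {a b : ℝ}

open ContinuousMap

variable (a b) in
noncomputable def neumannCos (m : ℕ) : C(ℝ, ℝ) :=
  ⟨fun x => cos (m * π / (b - a) * (x - a)), by fun_prop⟩

@[simp]
theorem neumannCos_apply (m : ℕ) (x : ℝ) :
    neumannCos a b m x = cos (m * π / (b - a) * (x - a)) := rfl

theorem neumannCos_mul_of_le {m n : ℕ} (hmn : m ≤ n) :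
    neumannCos a b n * neumannCos a b m =
      (1 / 2 : ℝ) • neumannCos a b (n + m) + (1 / 2 : ℝ) • neumannCos a b (n - m) := by
  ext x
  simp only [ContinuousMap.mul_apply, ContinuousMap.add_apply, ContinuousMap.smul_apply,
    neumannCos_apply, smul_eq_mul, Nat.cast_add, Nat.cast_sub hmn, add_mul, sub_mul, add_div,
    sub_div, cos_add, cos_sub]
  ring

open scoped Pointwise in
theorem mul_mem_span_neumannCos {p q : C(ℝ, ℝ)} (hp : p ∈ span ℝ (range (neumannCos a b)))
    (hq : q ∈ span ℝ (range (neumannCos a b))) : p * q ∈ span ℝ (range (neumannCos a b)) := by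
  have hprod : range (neumannCos a b) * range (neumannCos a b) ⊆
      span ℝ (range (neumannCos a b)) := by
    rintro _ ⟨_, ⟨n, rfl⟩, _, ⟨m, rfl⟩, rfl⟩
    have hmem {m n : ℕ} (hmn : m ≤ n) :
        neumannCos a b n * neumannCos a b m ∈ span ℝ (range (neumannCos a b)) := by
      rw [neumannCos_mul_of_le hmn]
      exact add_mem (smul_mem _ _ (subset_span (mem_range_self _)))
        (smul_mem _ _ (subset_span (mem_range_self _)))
    show neumannCos a b n * neumannCos a b m ∈ _
    rcases le_total m n with hmn | hnm
    · exact hmem hmn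
    · rw [mul_comm]
      exact hmem hnm
  have hmul : p * q ∈ span ℝ (range (neumannCos a b)) * span ℝ (range (neumannCos a b)) :=
    Submodule.mul_mem_mul hp hq
  rw [span_mul_span] at hmul
  exact span_le.mpr hprod hmul

theorem exists_mem_span_neumannCos_near (hab : a < b) (u : C(ℝ, ℝ)) {ε : ℝ} (hε : 0 < ε) :
    ∃ p ∈ span ℝ (range (neumannCos a b)), ∀ x ∈ Icc a b, |u x - p x| < ε := by
  have hone : (1 : C(ℝ, ℝ)) ∈ span ℝ (range (neumannCos a b)) := by
    have h0 : neumannCos a b 0 = 1 := by ext; simp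
    exact h0 ▸ subset_span (mem_range_self 0)
  let A : Subalgebra ℝ C(ℝ, ℝ) := (span ℝ (range (neumannCos a b))).toSubalgebra hone
    fun _ _ => mul_mem_span_neumannCos
  let restrict := compRightAlgHom ℝ ℝ (⟨Subtype.val, continuous_subtype_val⟩ : C(Icc a b, ℝ))
  have hsep : (A.map restrict).SeparatesPoints := by
    intro x y hxy
    refine ⟨_, ⟨_, ⟨neumannCos a b 1, subset_span (mem_range_self 1), rfl⟩, rfl⟩,
      fun hcos => hxy ?_⟩
    have hba : 0 < π / (b - a) := div_pos pi_pos (sub_pos.mpr hab)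
    have hmem : ∀ z : Icc a b, π / (b - a) * (z - a) ∈ Icc 0 π := fun ⟨z, hza, hzb⟩ =>
      ⟨by nlinarith, by
        calc π / (b - a) * (z - a) ≤ π / (b - a) * (b - a) := by gcongr
          _ = π := div_mul_cancel₀ π (sub_pos.mpr hab).ne'⟩
    have := mul_left_cancel₀ hba.ne'
      (injOn_cos (hmem x) (hmem y) (by simpa [restrict] using hcos))
    exact Subtype.ext (by linarith)
  obtain ⟨⟨_, p, hp, rfl⟩, hnear⟩ :=
    exists_mem_subalgebra_near_continuous_of_separatesPoints _ hsep (fun x : Icc a b => u x)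
      (by fun_prop) ε hε
  refine ⟨p, hp, fun x hx => ?_⟩
  simpa [restrict, abs_sub_comm] using hnear ⟨x, hx⟩

theorem isRobinEigenfunction_neumannCos (hab : a < b) (m : ℕ) :
    IsRobinEigenfunction a b 0 ((m * π / (b - a)) ^ 2) (neumannCos a b m) :=
  isRobinEigenfunction_cos (by simp [div_mul_cancel₀ _ (sub_ne_zero.mpr hab.ne'), sin_nat_mul_pi])

theorem toLpIoo_neumannCos_ne_zero (hab : a < b) (m : ℕ) :
    toLpIoo a b (neumannCos a b m) ≠ 0 :=
  toLpIoo_ne_zero hab (left_mem_Icc.mpr hab.le) (by simp)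

theorem inner_toLpIoo_neumannCos (hab : a < b) :
    Pairwise fun m n =>
      ⟪toLpIoo a b (neumannCos a b m), toLpIoo a b (neumannCos a b n)⟫_ℝ = 0 := by
  intro m n hmn
  have hba := sub_pos.mpr hab
  rw [inner_toLpIoo hab.le]
  refine (isRobinEigenfunction_neumannCos hab m).integral_mul_eq_zero
    (isRobinEigenfunction_neumannCos hab n) fun h => hmn ?_
  have := (sq_eq_sq₀ (by positivity) (by positivity)).mp h
  rw [div_left_inj' hba.ne', mul_left_inj' pi_ne_zero] at this
  exact_mod_cast this

theorem norm_toLpIoo_neumannCos (hab : a < b) {m : ℕ} (hm : m ≠ 0) :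
    ‖toLpIoo a b (neumannCos a b m)‖ = √((b - a) / 2) := by
  have hba := sub_pos.mpr hab
  have hω : m * π / (b - a) ≠ 0 := by positivity
  have hend : m * π / (b - a) * b - m * π / (b - a) * a = m * π := by field_simp
  rw [← sqrt_sq (norm_nonneg _), ← real_inner_self_eq_norm_sq, inner_toLpIoo hab.le]
  congr 1
  simp only [neumannCos_apply, ← sq, mul_sub]
  rw [intervalIntegral.integral_comp_mul_sub (fun y => cos y ^ 2) hω, integral_cos_sq, hend,
    sub_self, sin_nat_mul_pi, sin_zero, smul_eq_mul]
  field_simp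
  ring

theorem dense_span_toLpIoo_neumannCos (hab : a < b) :
    Dense (span ℝ (range fun m => toLpIoo a b (neumannCos a b m)) :
      Set (Lp ℝ 2 (volume.restrict (Ioo a b)))) := by
  have := dense_span_image_toLpIoo hab.le (S := range (neumannCos a b)) fun u ε hε => by
    obtain ⟨p, hp, hnear⟩ := exists_mem_span_neumannCos_near hab u hε
    exact ⟨p, hp, fun x hx => hnear x (Ioo_subset_Icc_self hx)⟩
  rwa [← range_comp] at this

variable (hab : a < b) in
noncomputable def neumannCosBasis : HilbertBasis ℕ ℝ (Lp ℝ 2 (volume.restrict (Ioo a b))) :=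
  HilbertBasis.mk (orthonormal_inv_norm_smul (toLpIoo_neumannCos_ne_zero hab)
    (inner_toLpIoo_neumannCos hab)) <| by
    rw [← dense_iff_topologicalClosure_eq_top.mp (dense_span_toLpIoo_neumannCos hab)]
    refine topologicalClosure_mono (span_le.mpr ?_)
    rintro _ ⟨m, rfl⟩
    have hx := smul_inv_smul₀ (norm_ne_zero_iff.mpr (toLpIoo_neumannCos_ne_zero hab m))
      (toLpIoo a b (neumannCos a b m))
    show toLpIoo a b (neumannCos a b m) ∈ span ℝ _
    rw [← hx]
    exact smul_mem _ _ (subset_span (mem_range_self m))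

theorem coe_neumannCosBasis (hab : a < b) :
    ⇑(neumannCosBasis hab) =
      fun m => ‖toLpIoo a b (neumannCos a b m)‖⁻¹ • toLpIoo a b (neumannCos a b m) :=
  HilbertBasis.coe_mk _ _

end NeumannCos

def IsDispersionRoot (μ0 H κ : ℝ) (n : ℕ) : Prop :=
  κ ∈ Ioo ((2 * (n : ℝ) - 1) * π / (2 * H)) ((n : ℝ) * π / H) ∧ μ0 + κ * tan (κ * H) = 0

namespace IsDispersionRoot

variable {μ0 H κ κ' : ℝ} {m n : ℕ}

theorem mul_mem_Ioo (hH : 0 < H) (hκ : IsDispersionRoot μ0 H κ n) :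
    κ * H ∈ Ioo ((2 * (n : ℝ) - 1) * π / 2) (n * π) := by
  obtain ⟨⟨hlo, hhi⟩, -⟩ := hκ
  rw [div_lt_iff₀ (by positivity)] at hlo
  rw [lt_div_iff₀ hH] at hhi
  exact ⟨by linarith, hhi⟩

theorem pos (hH : 0 < H) (hn : 1 ≤ n) (hκ : IsDispersionRoot μ0 H κ n) : 0 < κ := by
  have hn' : (1 : ℝ) ≤ n := by exact_mod_cast hn
  have : 0 < κ * H := lt_trans (by nlinarith [pi_pos]) (hκ.mul_mem_Ioo hH).1
  exact pos_of_mul_pos_left this hH.le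

theorem cos_ne_zero (hH : 0 < H) (hκ : IsDispersionRoot μ0 H κ n) : cos (κ * H) ≠ 0 := by
  obtain ⟨hlo, hhi⟩ := hκ.mul_mem_Ioo hH
  rw [Real.cos_ne_zero_iff]
  intro j hj
  rw [hj] at hlo hhi
  have h1 : ((2 * n - 1 : ℤ) : ℝ) < ((2 * j + 1 : ℤ) : ℝ) := by push_cast; nlinarith [pi_pos]
  have h2 : ((2 * j + 1 : ℤ) : ℝ) < ((2 * n : ℤ) : ℝ) := by push_cast; nlinarith [pi_pos]
  have := Int.cast_lt.mp h1
  have := Int.cast_lt.mp h2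
  omega

theorem mul_sin (hH : 0 < H) (hκ : IsDispersionRoot μ0 H κ n) :
    κ * sin (κ * H) = -(μ0 * cos (κ * H)) := by
  have hcos := hκ.cos_ne_zero hH
  have := hκ.2
  rw [tan_eq_sin_div_cos] at this
  field_simp at this
  linarith

theorem lt (hH : 0 < H) (hκ : IsDispersionRoot μ0 H κ n) (hκ' : IsDispersionRoot μ0 H κ' m)
    (hnm : n < m) : κ < κ' := by
  have hnm' : (n : ℝ) + 1 ≤ m := by exact_mod_cast hnm
  have := (hκ.mul_mem_Ioo hH).2
  have := (hκ'.mul_mem_Ioo hH).1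
  have : κ * H < κ' * H := by nlinarith [pi_pos]
  exact lt_of_mul_lt_mul_right this hH.le

theorem abs_sub_le (hμ0 : 0 < μ0) (hH : 0 < H) (hn : 1 ≤ n)
    (hκ : IsDispersionRoot μ0 H κ n) : |n * π / H - κ| ≤ 2 * μ0 / (n * π) := by
  have hn' : (1 : ℝ) ≤ n := by exact_mod_cast hn
  obtain ⟨hlo, hhi⟩ := hκ.mul_mem_Ioo hH
  have hκ0 := hκ.pos hH hn
  have htan : tan (n * π - κ * H) = μ0 / κ := by
    rw [tan_nat_mul_pi_sub, eq_div_iff hκ0.ne']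
    linarith [hκ.2]
  have hgap : n * π - κ * H < μ0 / κ := htan ▸ lt_tan (by linarith) (by linarith)
  have hκ_lower : n * π / (2 * H) < κ := by
    rw [div_lt_iff₀ (by positivity)]
    nlinarith [pi_pos]
  have hμ0κ : μ0 / κ < 2 * μ0 * H / (n * π) := by
    rw [div_lt_div_iff₀ hκ0 (by positivity)]
    rw [div_lt_iff₀ (by positivity)] at hκ_lower
    nlinarith
  have := hgap.trans hμ0κ
  rw [lt_div_iff₀ (by positivity)] at this
  rw [abs_of_pos (by rw [sub_pos, lt_div_iff₀ hH]; linarith), div_sub' hH.ne',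
    div_le_div_iff₀ hH (by positivity)]
  linarith

end IsDispersionRoot

section VerticalModes

variable {a b μ0 : ℝ} {k : ℕ → ℝ}

open ContinuousMap

noncomputable def verticalMode (a : ℝ) (k : ℕ → ℝ) : ℕ → C(ℝ, ℝ)
  | 0 => ⟨fun x => cosh (k 0 * (x - a)), by fun_prop⟩
  | n + 1 => ⟨fun x => cos (k (n + 1) * (x - a)), by fun_prop⟩

@[simp]
theorem verticalMode_zero_apply (x : ℝ) : verticalMode a k 0 x = cosh (k 0 * (x - a)) := rfl

@[simp]
theorem verticalMode_succ_apply (n : ℕ) (x : ℝ) :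
    verticalMode a k (n + 1) x = cos (k (n + 1) * (x - a)) := rfl

theorem toLpIoo_verticalMode_ne_zero (hab : a < b) (n : ℕ) :
    toLpIoo a b (verticalMode a k n) ≠ 0 :=
  toLpIoo_ne_zero hab (left_mem_Icc.mpr hab.le) (by cases n <;> simp)

theorem inner_toLpIoo_verticalMode (hab : a < b) (hk0 : μ0 = k 0 * tanh (k 0 * (b - a)))
    (hk : ∀ n, 1 ≤ n → IsDispersionRoot μ0 (b - a) (k n) n) :
    Pairwise fun m n =>
      ⟪toLpIoo a b (verticalMode a k m), toLpIoo a b (verticalMode a k n)⟫_ℝ = 0 := by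
  have hH := sub_pos.mpr hab
  let ν (n : ℕ) : ℝ := if n = 0 then -k 0 ^ 2 else k n ^ 2
  have hrobin : ∀ n, IsRobinEigenfunction a b μ0 (ν n) (verticalMode a k n)
    | 0 => isRobinEigenfunction_cosh (by
        rw [hk0, tanh_eq_sinh_div_cosh]
        field_simp)
    | n + 1 => isRobinEigenfunction_cos ((hk (n + 1) (by omega)).mul_sin hH)
  have hν : StrictMono ν := strictMono_nat_of_lt_succ fun n => by
    have hpos := (hk (n + 1) (by omega)).pos hH (by omega)
    rcases n with _ | n
    · simp only [ν, Nat.add_one_ne_zero, ↓reduceIte]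
      nlinarith
    · simp only [ν, Nat.add_one_ne_zero, if_false]
      have := (hk (n + 1) (by omega)).lt hH (hk (n + 2) (by omega)) (by omega)
      have := (hk (n + 1) (by omega)).pos hH (by omega)
      nlinarith
  intro m n hmn
  rw [inner_toLpIoo hab.le]
  exact (hrobin m).integral_mul_eq_zero (hrobin n) (hν.injective.ne hmn)

theorem IsDispersionRoot.abs_neumannCos_sub_cos_le {κ : ℝ} {n : ℕ} (hμ0 : 0 < μ0)
    (hab : a < b) (hn : 1 ≤ n) (hκ : IsDispersionRoot μ0 (b - a) κ n) {x : ℝ}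
    (hx : x ∈ Icc a b) :
    |neumannCos a b n x - cos (κ * (x - a))| ≤ 2 * μ0 / (n * π) * (b - a) :=
  calc |neumannCos a b n x - cos (κ * (x - a))|
      ≤ |n * π / (b - a) * (x - a) - κ * (x - a)| := abs_cos_sub_cos_le _ _
    _ = |n * π / (b - a) - κ| * (x - a) := by
        rw [← sub_mul, abs_mul, abs_of_nonneg (sub_nonneg.mpr hx.1)]
    _ ≤ 2 * μ0 / (n * π) * (b - a) :=
        mul_le_mul (hκ.abs_sub_le hμ0 (sub_pos.mpr hab) hn) (by linarith [hx.2])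
          (sub_nonneg.mpr hx.1) (by positivity)

theorem summable_norm_neumannCosBasis_sub_sq (hμ0 : 0 < μ0) (hab : a < b)
    (hk : ∀ n, 1 ≤ n → IsDispersionRoot μ0 (b - a) (k n) n) :
    Summable fun n => ‖neumannCosBasis hab n -
      ‖toLpIoo a b (neumannCos a b n)‖⁻¹ • toLpIoo a b (verticalMode a k n)‖ ^ 2 := by
  have hba := sub_pos.mpr hab
  set D := (√((b - a) / 2))⁻¹ * (√(b - a) * (2 * μ0 / π * (b - a)))
  have hbound (n : ℕ) (hn : 1 ≤ n) : ‖neumannCosBasis hab n -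
      ‖toLpIoo a b (neumannCos a b n)‖⁻¹ • toLpIoo a b (verticalMode a k n)‖ ≤ D / n := by
    obtain ⟨m, rfl⟩ : ∃ m, n = m + 1 := ⟨n - 1, by omega⟩
    rw [coe_neumannCosBasis, ← smul_sub, ← map_sub, norm_smul, norm_inv, norm_norm,
      norm_toLpIoo_neumannCos hab (by omega)]
    calc (√((b - a) / 2))⁻¹ * ‖toLpIoo a b (neumannCos a b (m + 1) - verticalMode a k (m + 1))‖
        ≤ (√((b - a) / 2))⁻¹ * (√(b - a) * (2 * μ0 / ((m + 1 : ℕ) * π) * (b - a))) := by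
          gcongr
          exact norm_toLpIoo_le hab.le (by positivity) fun x hx =>
            (hk (m + 1) hn).abs_neumannCos_sub_cos_le hμ0 hab hn (Ioo_subset_Icc_self hx)
      _ = D / (m + 1 : ℕ) := by
          simp only [D]
          field_simp
  refine .of_norm_bounded_eventually_nat
    ((summable_one_div_nat_pow.mpr one_lt_two).mul_left (D ^ 2)) ?_
  filter_upwards [eventually_ge_atTop 1] with n hn
  rw [norm_pow, norm_norm]
  calc _ ≤ (D / n) ^ 2 := pow_le_pow_left₀ (norm_nonneg _) (hbound n hn) 2
    _ = D ^ 2 * (1 / (n : ℝ) ^ 2) := by ring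

end VerticalModes

/-- Completeness of the eigenfunctions `{Zₙ : n ≥ 0}` of the reference waveguide:
the linear span of the family is dense in `L²((−h, η))`. -/
theorem eigenfunction_completeness (μ0 H h η : ℝ) (hμ0 : 0 < μ0) (hH : 0 < H)
    (hηh : η + h = H) (k : ℕ → ℝ)
    (hk0 : 0 < k 0 ∧ μ0 = k 0 * Real.tanh (k 0 * H))
    (hk : ∀ n : ℕ, 1 ≤ n →
      k n ∈ Set.Ioo ((2 * (n : ℝ) - 1) * π / (2 * H)) ((n : ℝ) * π / H) ∧
      μ0 + k n * Real.tan (k n * H) = 0)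
    (Z : ℕ → ℝ → ℝ)
    (hZ0 : ∀ z, Z 0 z = Real.cosh (k 0 * (z + h)) / Real.cosh (k 0 * H))
    (hZn : ∀ n : ℕ, 1 ≤ n → ∀ z, Z n z = Real.cos (k n * (z + h)) / Real.cos (k n * H)) :
    Dense ((Submodule.span ℝ
      {f : Lp ℝ 2 (volume.restrict (Set.Ioo (-h) η)) |
        ∃ n : ℕ, (f : ℝ → ℝ) =ᵐ[volume.restrict (Set.Ioo (-h) η)] Z n} :
      Submodule ℝ (Lp ℝ 2 (volume.restrict (Set.Ioo (-h) η)))) :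
      Set (Lp ℝ 2 (volume.restrict (Set.Ioo (-h) η)))) := by
  obtain rfl : H = η - -h := by linarith
  have hab : -h < η := by linarith
  have hroot : ∀ n, 1 ≤ n → IsDispersionRoot μ0 (η - -h) (k n) n := hk
  have hmode : ∀ n, ∃ r ≠ 0, ∀ z, verticalMode (-h) k n z = r * Z n z
    | 0 => ⟨_, (cosh_pos _).ne', fun z => by
        rw [hZ0, verticalMode_zero_apply, sub_neg_eq_add, mul_div_cancel₀ _ (cosh_pos _).ne']⟩
    | n + 1 => ⟨_, (hroot (n + 1) (by omega)).cos_ne_zero hH, fun z => by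
        rw [hZn _ (by omega), verticalMode_succ_apply, sub_neg_eq_add,
          mul_div_cancel₀ _ ((hroot (n + 1) (by omega)).cos_ne_zero hH)]⟩
  refine ((neumannCosBasis hab).dense_span_of_summable_norm_sub_sq
    (fun n => smul_ne_zero (inv_ne_zero (norm_ne_zero_iff.mpr (toLpIoo_neumannCos_ne_zero hab n)))
      (toLpIoo_verticalMode_ne_zero hab n))
    (fun m n hmn => by
      simp [real_inner_smul_left, real_inner_smul_right,
        inner_toLpIoo_verticalMode hab hk0.2 hroot hmn])
    (summable_norm_neumannCosBasis_sub_sq hμ0 hab hroot)).mono (span_le.mpr ?_)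
  rintro _ ⟨n, rfl⟩
  obtain ⟨r, hr, hrZ⟩ := hmode n
  exact smul_mem _ _ (span_mono (ofPred_subset_ofPred.mpr fun F hF => ⟨n, hF⟩)
    (ContinuousMap.toLpIoo_mem_span_of_eq_mul hr hrZ))
end

section
/- Fix a real constant μ0 > 0 and an integer n ≥ 1, and for H > 0 let k_n(H) be the unique solution k of μ0 + k·tan(k·H) = 0 in ((2n−1)π/(2H), nπ/H). Then the function H ↦ k_n(H) is differentiable on (0, ∞), the quantity −μ0 + H·(k_n(H)² + μ0²) is strictly positive, and d k_n/dH = −k_n·(k_n² + μ0²) / (−μ0 + H·(k_n² + μ0²)). -/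
/-!
For `k > 0`, the dispersion relation on the `n`-th branch is equivalent to
`k H = n π − arctan (μ₀ / k)`, so `kₙ` is inverse to the explicit function
`φ(k) = (n π − arctan (μ₀ / k)) / k` (`branchDepth μ0 n`). The derivative of `φ` is
`(μ₀ − φ(k)(k² + μ₀²)) / (k (k² + μ₀²))`, which is negative because `k φ(k) ≥ π/2` and
`2 μ₀ k ≤ k² + μ₀²`. Hence `φ` is strictly decreasing, and the inverse function theorem gives
`kₙ' = 1 / φ'(kₙ)`, which is the stated formula once `φ(kₙ(H)) = H` is substituted.
-/

open Real Set Filter Topology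

theorem HasStrictDerivAt.of_local_left_inverse_of_injOn {𝕜 : Type*} [NontriviallyNormedField 𝕜]
    [CompleteSpace 𝕜] {f g : 𝕜 → 𝕜} {f' a : 𝕜} {s : Set 𝕜}
    (hf : HasStrictDerivAt f f' (g a)) (hf' : f' ≠ 0) (hs : s ∈ 𝓝 (g a)) (hinj : InjOn f s)
    (hfg : ∀ᶠ y in 𝓝 a, g y ∈ s ∧ f (g y) = y) : HasStrictDerivAt g f'⁻¹ a := by
  have hfga : f (g a) = a := hfg.self_of_nhds.2
  have hgf : ∀ᶠ x in 𝓝 (g a), g (f x) = x := by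
    have hfg' : ∀ᶠ x in 𝓝 (g a), g (f x) ∈ s ∧ f (g (f x)) = f x :=
      hf.hasDerivAt.continuousAt.eventually (hfga ▸ hfg)
    filter_upwards [hs, hfg'] with x hx ⟨hgfx, hfgfx⟩
    exact hinj hgfx hx hfgfx
  simpa only [hfga] using hf.to_local_left_inverse hf' hgf

noncomputable def branchDepth (μ0 : ℝ) (n : ℕ) (x : ℝ) : ℝ := (n * π - arctan (μ0 / x)) / x

noncomputable def branchDepthDeriv (μ0 : ℝ) (n : ℕ) (x : ℝ) : ℝ :=
  (μ0 - branchDepth μ0 n x * (x ^ 2 + μ0 ^ 2)) / (x * (x ^ 2 + μ0 ^ 2))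

section

variable {μ0 : ℝ} {n : ℕ} {x : ℝ}

theorem hasStrictDerivAt_branchDepth (hx : 0 < x) :
    HasStrictDerivAt (branchDepth μ0 n) (branchDepthDeriv μ0 n x) x := by
  have hquot : HasStrictDerivAt (fun y => μ0 / y) (μ0 * -(x ^ 2)⁻¹) x := by
    simpa only [div_eq_mul_inv] using (hasStrictDerivAt_inv hx.ne').const_mul μ0
  have hdiv := ((hasStrictDerivAt_const x ((n : ℝ) * π)).sub hquot.arctan).div
    (hasStrictDerivAt_id x) hx.ne'
  refine hdiv.congr_deriv ?_
  unfold branchDepthDeriv branchDepth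
  simp only [id, Pi.sub_apply]
  field_simp
  ring

theorem pi_div_two_le_natCast_mul_pi_sub_arctan (hn : 1 ≤ n) (y : ℝ) :
    π / 2 ≤ n * π - arctan y := by
  have hnπ : π ≤ n * π := le_mul_of_one_le_left pi_pos.le (by exact_mod_cast hn)
  linarith [arctan_lt_pi_div_two y]

theorem lt_branchDepth_mul (hn : 1 ≤ n) (hx : 0 < x) :
    μ0 < branchDepth μ0 n x * (x ^ 2 + μ0 ^ 2) := by
  have hψ := pi_div_two_le_natCast_mul_pi_sub_arctan hn (μ0 / x)
  have hmul : x * branchDepth μ0 n x = n * π - arctan (μ0 / x) := by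
    unfold branchDepth
    field_simp
  nlinarith [sq_nonneg (x - μ0), pi_gt_three, sq_pos_of_pos hx]

theorem branchDepthDeriv_neg (hn : 1 ≤ n) (hx : 0 < x) : branchDepthDeriv μ0 n x < 0 :=
  div_neg_of_neg_of_pos (sub_neg.2 (lt_branchDepth_mul hn hx)) (by positivity)

theorem strictAntiOn_branchDepth (hn : 1 ≤ n) : StrictAntiOn (branchDepth μ0 n) (Ioi 0) := by
  refine strictAntiOn_of_hasDerivWithinAt_neg (f' := branchDepthDeriv μ0 n) (convex_Ioi 0)
    (fun x hx => (hasStrictDerivAt_branchDepth hx).hasDerivAt.continuousAt.continuousWithinAt)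
    (fun x hx => ?_) (fun x hx => ?_)
  all_goals rw [interior_Ioi] at hx
  · exact (hasStrictDerivAt_branchDepth hx).hasDerivAt.hasDerivWithinAt
  · exact branchDepthDeriv_neg hn hx

theorem branchDepth_eq_of_dispersion {H : ℝ} (hn : 1 ≤ n) (hH : 0 < H)
    (hx : x ∈ Ioo ((2 * (n : ℝ) - 1) * π / (2 * H)) ((n : ℝ) * π / H))
    (hdisp : μ0 + x * tan (x * H) = 0) : 0 < x ∧ branchDepth μ0 n x = H := by
  obtain ⟨hlo, hhi⟩ := hx
  have hn' : (1 : ℝ) ≤ n := by exact_mod_cast hn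
  have hx0 : 0 < x := lt_trans (div_pos (mul_pos (by linarith) pi_pos) (by linarith)) hlo
  rw [div_lt_iff₀ (by positivity)] at hlo
  rw [lt_div_iff₀ hH] at hhi
  -- `x H − n π` lies in `(−π/2, 0)`, where `arctan` inverts the `π`-periodic `tan`.
  have htan : tan (x * H - n * π) = -(μ0 / x) := by
    rw [tan_periodic.sub_nat_mul_eq n]
    field_simp
    linarith
  have harctan : arctan (μ0 / x) = n * π - x * H := by
    have := arctan_tan (x := x * H - n * π) (by linarith) (by linarith)
    rw [htan, arctan_neg] at this
    linarith
  refine ⟨hx0, ?_⟩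
  unfold branchDepth
  rw [harctan]
  field_simp
  ring

end

theorem eigenvalue_first_derivative_general (μ0 : ℝ) (n : ℕ) (hn : 1 ≤ n)
    (k : ℝ → ℝ)
    (hk : ∀ H : ℝ, 0 < H →
      k H ∈ Set.Ioo ((2 * (n : ℝ) - 1) * π / (2 * H)) ((n : ℝ) * π / H) ∧
      μ0 + k H * Real.tan (k H * H) = 0) :
    DifferentiableOn ℝ k (Set.Ioi 0) ∧
    ∀ H : ℝ, 0 < H →
      0 < -μ0 + H * ((k H) ^ 2 + μ0 ^ 2) ∧
      HasDerivAt k (-(k H * ((k H) ^ 2 + μ0 ^ 2)) / (-μ0 + H * ((k H) ^ 2 + μ0 ^ 2))) H := by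
  have hdepth : ∀ H, 0 < H → 0 < k H ∧ branchDepth μ0 n (k H) = H := fun H hH =>
    branchDepth_eq_of_dispersion hn hH (hk H hH).1 (hk H hH).2
  have hderiv : ∀ H, 0 < H → HasStrictDerivAt k (branchDepthDeriv μ0 n (k H))⁻¹ H := by
    intro H hH
    have hkH := (hdepth H hH).1
    refine (hasStrictDerivAt_branchDepth hkH).of_local_left_inverse_of_injOn
      (branchDepthDeriv_neg hn hkH).ne (Ioi_mem_nhds hkH) (strictAntiOn_branchDepth hn).injOn ?_
    filter_upwards [Ioi_mem_nhds hH] with y hy using hdepth y hy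
  refine ⟨fun H hH => (hderiv H hH).hasDerivAt.differentiableAt.differentiableWithinAt, fun H hH => ?_⟩
  obtain ⟨hkH, hkH_depth⟩ := hdepth H hH
  have hpos := lt_branchDepth_mul (μ0 := μ0) hn hkH
  rw [hkH_depth] at hpos
  refine ⟨by linarith, ?_⟩
  refine (hderiv H hH).hasDerivAt.congr_deriv ?_
  unfold branchDepthDeriv
  rw [hkH_depth, inv_div, ← neg_div_neg_eq, neg_sub, neg_add_eq_sub]

/-- Proposition 1, Eq. (3.4): the eigenvalue branch `H ↦ kₙ(H)` is differentiable on
`(0, ∞)`, the denominator `−μ₀ + H(kₙ² + μ₀²)` is strictly positive, and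
`dkₙ/dH = −kₙ(kₙ² + μ₀²)/(−μ₀ + H(kₙ² + μ₀²))`. -/
theorem eigenvalue_first_derivative (μ0 : ℝ) (hμ0 : 0 < μ0) (n : ℕ) (hn : 1 ≤ n)
    (k : ℝ → ℝ)
    (hk : ∀ H : ℝ, 0 < H →
      k H ∈ Set.Ioo ((2 * (n : ℝ) - 1) * π / (2 * H)) ((n : ℝ) * π / H) ∧
      μ0 + k H * Real.tan (k H * H) = 0) :
    DifferentiableOn ℝ k (Set.Ioi 0) ∧
    ∀ H : ℝ, 0 < H →
      0 < -μ0 + H * ((k H) ^ 2 + μ0 ^ 2) ∧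
      HasDerivAt k (-(k H * ((k H) ^ 2 + μ0 ^ 2)) / (-μ0 + H * ((k H) ^ 2 + μ0 ^ 2))) H :=
  eigenvalue_first_derivative_general μ0 n hn k hk
end

section
/- Fix a real constant μ0 > 0 and an integer n ≥ 1, and for H > 0 let k_n(H) be the unique solution k of μ0 + k·tan(k·H) = 0 in ((2n−1)π/(2H), nπ/H). Then H ↦ k_n(H) is twice differentiable on (0, ∞) and its second derivative satisfies d²k_n/dH² = −2·(dk_n/dH)·{ μ0 + ((dk_n/dH)/k_n)·(H·μ0 − 1)·(2 + H·(dk_n/dH)/k_n) }. -/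
/-!
On the `n`-th branch, `k H ∈ ((n - 1/2)π, nπ)` and `tan (k H) = -μ0 / k`, so inverting the tangent
gives `k H = nπ - arctan (μ0 / k)`, i.e. `H = g k` with `g = branchInv μ0 n`.
The function `g` is strictly decreasing, since `g' k = (μ0 - g k (k² + μ0²)) / (k (k² + μ0²)) < 0`
(because `k g k > π/2 > 1`). Hence `kₙ` is the continuous inverse of `g`, and the inverse function
theorem gives `kₙ' = k (k² + μ0²) / (μ0 - H (k² + μ0²))`. The right-hand side is a rational
function of `H` and `kₙ(H)`; differentiating it once more and eliminating `kₙ'` gives (3.5).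
-/

open Real

open Set Filter Topology

theorem arctan_tan_eq_sub_int_mul_pi {x : ℝ} (n : ℤ) (hx₁ : n * π - π / 2 < x)
    (hx₂ : x < n * π + π / 2) : arctan (tan x) = x - n * π := by
  rw [← tan_periodic.sub_int_mul_eq n, arctan_tan (by linarith) (by linarith)]

noncomputable def branchInv (μ0 : ℝ) (n : ℕ) (x : ℝ) : ℝ :=
  (n * π - arctan (μ0 / x)) / x

noncomputable def dispersionSlope (μ0 H x : ℝ) : ℝ :=
  x * (x ^ 2 + μ0 ^ 2) / (μ0 - H * (x ^ 2 + μ0 ^ 2))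

section branchInv

variable {μ0 : ℝ} {n : ℕ} {x : ℝ}

theorem branchInv_eq_of_dispersion {H : ℝ} (hx : 0 < x)
    (hlo : (2 * n - 1) * π / 2 < x * H) (hhi : x * H < n * π)
    (hdisp : μ0 + x * tan (x * H) = 0) : branchInv μ0 n x = H := by
  have htan : tan (x * H) = -(μ0 / x) := by
    field_simp
    linear_combination hdisp
  have harctan := arctan_tan_eq_sub_int_mul_pi (x := x * H) n (by push_cast; linarith)
    (by push_cast; linarith)
  rw [htan, arctan_neg] at harctan
  push_cast at harctan
  rw [branchInv, div_eq_iff hx.ne']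
  linarith

theorem one_lt_mul_branchInv (hn : 1 ≤ n) (hx : 0 < x) : 1 < x * branchInv μ0 n x := by
  have hn' : (1 : ℝ) ≤ n := by exact_mod_cast hn
  rw [branchInv, mul_div_cancel₀ _ hx.ne']
  nlinarith [arctan_lt_pi_div_two (μ0 / x), pi_gt_three]

theorem branchInv_pos (hn : 1 ≤ n) (hx : 0 < x) : 0 < branchInv μ0 n x :=
  pos_of_mul_pos_right ((one_lt_mul_branchInv hn hx).trans' one_pos) hx.le

theorem sub_mul_branchInv_neg (hn : 1 ≤ n) (hx : 0 < x) :
    μ0 - branchInv μ0 n x * (x ^ 2 + μ0 ^ 2) < 0 := by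
  have h := one_lt_mul_branchInv (μ0 := μ0) hn hx
  have hg := branchInv_pos (μ0 := μ0) hn hx
  nlinarith [mul_nonneg hg.le (sq_nonneg (x - μ0)), mul_pos hg (sq_pos_of_pos hx)]

theorem dispersionSlope_branchInv_neg (hn : 1 ≤ n) (hx : 0 < x) :
    dispersionSlope μ0 (branchInv μ0 n x) x < 0 :=
  div_neg_of_pos_of_neg (by positivity) (sub_mul_branchInv_neg hn hx)

theorem hasDerivAt_branchInv (hx : x ≠ 0) :
    HasDerivAt (branchInv μ0 n) (dispersionSlope μ0 (branchInv μ0 n x) x)⁻¹ x := by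
  have harctan : HasDerivAt (fun x => arctan (μ0 / x)) (-μ0 / (x ^ 2 + μ0 ^ 2)) x := by
    convert ((hasDerivAt_inv hx).const_mul μ0).arctan using 1
    · ext; simp [div_eq_mul_inv]
    · field_simp
  refine ((harctan.const_sub (n * π)).div (hasDerivAt_id x) hx).congr_deriv ?_
  have : x ^ 2 + μ0 ^ 2 ≠ 0 := by positivity
  simp only [dispersionSlope, branchInv, inv_div, id]
  field_simp

theorem strictAntiOn_branchInv (hn : 1 ≤ n) : StrictAntiOn (branchInv μ0 n) (Ioi 0) := by
  refine strictAntiOn_of_deriv_neg (convex_Ioi 0)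
    (fun x hx => (hasDerivAt_branchInv (ne_of_gt hx)).continuousAt.continuousWithinAt) ?_
  intro x hx
  rw [interior_Ioi] at hx
  rw [(hasDerivAt_branchInv (ne_of_gt hx)).deriv, inv_lt_zero]
  exact dispersionSlope_branchInv_neg hn hx

end branchInv

theorem continuousAt_of_leftInvOn_of_strictAntiOn {g k : ℝ → ℝ} {s t : Set ℝ} {a : ℝ}
    (hg : StrictAntiOn g t) (hgt : MapsTo g t s) (hks : MapsTo k s t) (hinv : LeftInvOn g k s)
    (hs : s ∈ 𝓝 a) (ht : IsOpen t) : ContinuousAt k a := by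
  have himage : k '' s = t := by
    refine (image_subset_iff.2 hks).antisymm fun y hy => ⟨g y, hgt hy, ?_⟩
    exact hg.injOn (hks (hgt hy)) hy (hinv (hgt hy))
  have hanti : AntitoneOn k s := fun x hx y hy hxy =>
    (hg.le_iff_ge (hks hx) (hks hy)).1 (by rwa [hinv hx, hinv hy])
  have hneg : ContinuousAt (fun x => -k x) a := by
    refine continuousAt_of_monotoneOn_of_image_mem_nhds (fun x hx y hy hxy => neg_le_neg
      (hanti hx hy hxy)) hs ?_
    rw [← image_image (fun y => -y) k, himage, image_neg_eq_neg]
    exact (ht.neg).mem_nhds (by simpa using hks (mem_of_mem_nhds hs))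
  convert hneg.neg using 1
  ext
  simp

theorem HasDerivAt.dispersionSlope_comp {μ0 H d : ℝ} {k : ℝ → ℝ} (hk : HasDerivAt k d H)
    (hd : d = dispersionSlope μ0 H (k H)) (hk0 : k H ≠ 0)
    (hden : μ0 - H * (k H ^ 2 + μ0 ^ 2) ≠ 0) :
    HasDerivAt (fun t => dispersionSlope μ0 t (k t))
      (-2 * d * (μ0 + (d / k H) * (H * μ0 - 1) * (2 + H * (d / k H)))) H := by
  have hsq : HasDerivAt (fun t => k t ^ 2 + μ0 ^ 2) (2 * k H * d) H := by
    simpa [mul_comm] using (hk.pow 2).add_const (μ0 ^ 2)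
  refine ((hk.mul hsq).div ((hasDerivAt_id' H).mul hsq |>.const_sub μ0) hden).congr_deriv ?_
  have : k H ^ 2 + μ0 ^ 2 ≠ 0 := by positivity
  subst hd
  simp only [dispersionSlope, Pi.mul_apply]
  generalize hM : μ0 - H * (k H ^ 2 + μ0 ^ 2) = M at *
  field_simp
  rw [← hM]
  ring

theorem eigenvalue_second_derivative_general (μ0 : ℝ) (n : ℕ) (hn : 1 ≤ n)
    (k : ℝ → ℝ)
    (hk : ∀ H : ℝ, 0 < H →
      k H ∈ Set.Ioo ((2 * (n : ℝ) - 1) * π / (2 * H)) ((n : ℝ) * π / H) ∧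
      μ0 + k H * Real.tan (k H * H) = 0) :
    ∀ H : ℝ, 0 < H →
      HasDerivAt k (deriv k H) H ∧
      HasDerivAt (deriv k)
        (-2 * deriv k H *
          (μ0 + (deriv k H / k H) * (H * μ0 - 1) * (2 + H * (deriv k H / k H)))) H := by
  have hk_pos : MapsTo k (Ioi 0) (Ioi 0) := fun H (hH : 0 < H) => by
    have : (1 : ℝ) ≤ n := by exact_mod_cast hn
    exact lt_trans (div_pos (mul_pos (by linarith) pi_pos) (by positivity)) (hk H hH).1.1
  have hinv : LeftInvOn (branchInv μ0 n) k (Ioi 0) := by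
    intro H (hH : 0 < H)
    obtain ⟨⟨hlo, hhi⟩, hdisp⟩ := hk H hH
    rw [div_lt_iff₀ (by positivity)] at hlo
    rw [lt_div_iff₀ hH] at hhi
    exact branchInv_eq_of_dispersion (hk_pos hH) (by linarith) hhi hdisp
  have hderiv : ∀ H, 0 < H → HasDerivAt k (dispersionSlope μ0 H (k H)) H := by
    intro H hH
    have hcont := continuousAt_of_leftInvOn_of_strictAntiOn (strictAntiOn_branchInv hn)
      (fun x hx => branchInv_pos (μ0 := μ0) hn hx) hk_pos hinv (Ioi_mem_nhds hH) isOpen_Ioi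
    have hslope := dispersionSlope_branchInv_neg (μ0 := μ0) hn (hk_pos hH)
    have h := HasDerivAt.of_local_left_inverse hcont
      (hasDerivAt_branchInv (μ0 := μ0) (n := n) (hk_pos hH).ne') (inv_ne_zero hslope.ne)
      (eventually_of_mem (Ioi_mem_nhds hH) hinv)
    rwa [inv_inv, hinv hH] at h
  intro H hH
  have hk' := hderiv H hH
  have hden := sub_mul_branchInv_neg (μ0 := μ0) hn (hk_pos hH)
  rw [hinv hH] at hden
  have hderiv_eq : deriv k =ᶠ[𝓝 H] fun t => dispersionSlope μ0 t (k t) :=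
    eventually_of_mem (Ioi_mem_nhds hH) fun t ht => (hderiv t ht).deriv
  rw [hderiv_eq.hasDerivAt_iff, hk'.deriv]
  exact ⟨hk', hk'.dispersionSlope_comp rfl (hk_pos hH).ne' hden.ne⟩

/-- Proposition 1, Eq. (3.5): the eigenvalue branch `H ↦ kₙ(H)` is twice differentiable
on `(0, ∞)` and
`d²kₙ/dH² = −2(dkₙ/dH)·{μ₀ + ((dkₙ/dH)/kₙ)(Hμ₀ − 1)(2 + H(dkₙ/dH)/kₙ)}`. -/
theorem eigenvalue_second_derivative (μ0 : ℝ) (hμ0 : 0 < μ0) (n : ℕ) (hn : 1 ≤ n)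
    (k : ℝ → ℝ)
    (hk : ∀ H : ℝ, 0 < H →
      k H ∈ Set.Ioo ((2 * (n : ℝ) - 1) * π / (2 * H)) ((n : ℝ) * π / H) ∧
      μ0 + k H * Real.tan (k H * H) = 0) :
    ∀ H : ℝ, 0 < H →
      HasDerivAt k (deriv k H) H ∧
      HasDerivAt (deriv k)
        (-2 * deriv k H *
          (μ0 + (deriv k H / k H) * (H * μ0 - 1) * (2 + H * (deriv k H / k H)))) H :=
  eigenvalue_second_derivative_general μ0 n hn k hk
end

section
/- Fix real constants μ0 > 0 and H > 0, and for each integer n ≥ 1 let k_n(H) be the unique solution k of μ0 + k·tan(k·H) = 0 in ((2n−1)π/(2H), nπ/H), which is a differentiable function of H. Then (dk_n/dH)(H) / k_n(H) → −1/H as n → ∞, and there exists a constant C > 0 such that |dk_n/dH| ≤ C·n and |d²k_n/dH²| ≤ C·n for all n ≥ 1. -/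
/-!
On the `n`-th branch, `k H ∈ (nπ - π/2, nπ)`, the relation `μ0 + k tan (k H) = 0` is
equivalent to `k H = nπ - arctan (μ0 / k)`, so `H = (nπ - arctan (μ0 / k)) / k` as a function
of `k`. Its derivative `-(H - μ0 / (k² + μ0²)) / k` is negative because `H k > π/2` forces
`μ0 / (k² + μ0²) < H / 3`. Hence `k_n` is the inverse of a strictly decreasing function: it is
continuous by monotonicity, and the inverse function theorem gives `k_n' = -k_n / E` with
`E = H - μ0 / (k_n² + μ0²) > 2H/3`, and then
`k_n'' = k_n (2 - 2 μ0 k_n² / (E (k_n² + μ0²)²)) / E²`, whose middle factor lies in `[0, 2]`.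
With `k_n < nπ/H` this gives both linear bounds, and `k_n → ∞` gives `E → H`, hence
`k_n' / k_n = -1 / E → -1 / H`.
-/

open Real Filter Set Topology

theorem continuousAt_of_rightInvOn_of_strictAntiOn {α β : Type*} [LinearOrder α]
    [TopologicalSpace α] [OrderTopology α] [LinearOrder β] [TopologicalSpace β]
    [OrderTopology β] [DenselyOrdered β] {f : β → α} {g : α → β} {s : Set α} {t : Set β}
    {a : α} (hf : StrictAntiOn f t) (hft : MapsTo f t s) (hgs : MapsTo g s t)
    (hfg : RightInvOn g f s) (hs : s ∈ 𝓝 a) (ht : t ∈ 𝓝 (g a)) : ContinuousAt g a := by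
  have hg : AntitoneOn g s := fun x hx y hy hxy => by
    by_contra! hlt
    have := hf (hgs hx) (hgs hy) hlt
    rw [hfg hx, hfg hy] at this
    exact this.not_ge hxy
  have himage : t ⊆ g '' s := fun κ hκ =>
    ⟨f κ, hft hκ, hf.injOn (hgs (hft hκ)) hκ (hfg (hft hκ))⟩
  exact continuousAt_of_monotoneOn_of_image_mem_nhds (β := βᵒᵈ) hg.dual_right hs
    (mem_of_superset ht himage)

noncomputable def branchHeight (μ0 : ℝ) (n : ℕ) (κ : ℝ) : ℝ :=
  (n * π - arctan (μ0 / κ)) / κ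

noncomputable def reducedHeight (μ0 x κ : ℝ) : ℝ :=
  x - μ0 / (κ ^ 2 + μ0 ^ 2)

section
variable {μ0 : ℝ}

theorem two_mul_div_three_lt_reducedHeight (hμ0 : 0 < μ0) {x κ : ℝ} (hκ : 0 < κ)
    (h : π / 2 < x * κ) : 2 * x / 3 < reducedHeight μ0 x κ := by
  have hfrac : μ0 / (κ ^ 2 + μ0 ^ 2) < x / 3 := by
    rw [div_lt_div_iff₀ (by positivity) three_pos]
    nlinarith [mul_nonneg (pos_of_mul_pos_left ((div_pos pi_pos two_pos).trans h) hκ.le).le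
      (sq_nonneg (κ - μ0)), mul_lt_mul_of_pos_right h hμ0, pi_gt_three]
  rw [reducedHeight]
  linarith

theorem tendsto_reducedHeight {ι : Type*} {l : Filter ι} {f : ι → ℝ} (x : ℝ)
    (hf : Tendsto f l atTop) : Tendsto (fun i => reducedHeight μ0 x (f i)) l (𝓝 x) := by
  have hS : Tendsto (fun i => f i ^ 2 + μ0 ^ 2) l atTop :=
    tendsto_atTop_add_const_right l _ ((tendsto_pow_atTop two_ne_zero).comp hf)
  simpa [reducedHeight] using tendsto_const_nhds.sub (tendsto_const_nhds.div_atTop hS)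

variable (hμ0 : 0 < μ0) {x u : ℝ} (hu : 0 < u) (h : π / 2 < x * u)
include hμ0 hu h

theorem abs_neg_div_reducedHeight_le : |-u / reducedHeight μ0 x u| ≤ 3 / (2 * x) * u := by
  have hx : 0 < x := pos_of_mul_pos_left ((div_pos pi_pos two_pos).trans h) hu.le
  have hE := two_mul_div_three_lt_reducedHeight hμ0 hu h
  rw [abs_div, abs_neg, abs_of_pos hu, abs_of_pos (by linarith), div_le_iff₀ (by linarith)]
  calc u = 3 / (2 * x) * u * (2 * x / 3) := by field_simp
    _ ≤ 3 / (2 * x) * u * reducedHeight μ0 x u := by gcongr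

theorem abs_mul_two_sub_div_reducedHeight_sq_le :
    |u * (2 - 2 * μ0 * u ^ 2 / (reducedHeight μ0 x u * (u ^ 2 + μ0 ^ 2) ^ 2)) /
      reducedHeight μ0 x u ^ 2| ≤ 9 / (2 * x ^ 2) * u := by
  have hx : 0 < x := pos_of_mul_pos_left ((div_pos pi_pos two_pos).trans h) hu.le
  have hE := two_mul_div_three_lt_reducedHeight hμ0 hu h
  have hE0 : 0 < reducedHeight μ0 x u := by linarith
  have hS : 0 < u ^ 2 + μ0 ^ 2 := by positivity
  have hES : μ0 ≤ reducedHeight μ0 x u * (u ^ 2 + μ0 ^ 2) := by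
    have hES_eq : reducedHeight μ0 x u * (u ^ 2 + μ0 ^ 2) = x * (u ^ 2 + μ0 ^ 2) - μ0 := by
      rw [reducedHeight]; field_simp
    nlinarith [mul_lt_mul_of_pos_right hE hS]
  have ht : |2 - 2 * μ0 * u ^ 2 / (reducedHeight μ0 x u * (u ^ 2 + μ0 ^ 2) ^ 2)| ≤ 2 := by
    have h0 : 0 ≤ 2 * μ0 * u ^ 2 / (reducedHeight μ0 x u * (u ^ 2 + μ0 ^ 2) ^ 2) := by
      positivity
    have h2 : 2 * μ0 * u ^ 2 / (reducedHeight μ0 x u * (u ^ 2 + μ0 ^ 2) ^ 2) ≤ 2 := by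
      rw [div_le_iff₀ (by positivity)]
      nlinarith [mul_le_mul hES (le_add_of_nonneg_right (sq_nonneg μ0)) (sq_nonneg u)
        (by positivity)]
    exact abs_le.mpr ⟨by linarith, by linarith⟩
  rw [abs_div, abs_mul, abs_of_pos hu, abs_of_pos (pow_pos hE0 2), div_le_iff₀ (by positivity)]
  calc u * |2 - 2 * μ0 * u ^ 2 / (reducedHeight μ0 x u * (u ^ 2 + μ0 ^ 2) ^ 2)|
      ≤ u * 2 := by gcongr
    _ = 9 / (2 * x ^ 2) * u * (2 * x / 3) ^ 2 := by field_simp; ring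
    _ ≤ 9 / (2 * x ^ 2) * u * reducedHeight μ0 x u ^ 2 := by gcongr

end

section
variable {μ0 : ℝ} {n : ℕ}

theorem branchHeight_eq_of_dispersion (hμ0 : μ0 ≠ 0) {x u : ℝ} (hx : 0 < x)
    (hu : u ∈ Ioo ((2 * n - 1) * π / (2 * x)) (n * π / x)) (heq : μ0 + u * tan (u * x) = 0) :
    branchHeight μ0 n u = x := by
  obtain ⟨hlo, hhi⟩ := hu
  rw [div_lt_iff₀ (by positivity)] at hlo
  rw [lt_div_iff₀ hx] at hhi
  have hu0 : u ≠ 0 := by rintro rfl; simp [hμ0] at heq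
  have htan : tan (u * x - n * π) = -(μ0 / u) := by
    rw [tan_periodic.sub_nat_mul_eq]
    field_simp
    linarith
  have harctan := arctan_tan (x := u * x - n * π) (by linarith) (by linarith)
  rw [htan, arctan_neg] at harctan
  rw [branchHeight, div_eq_iff hu0]
  linarith

theorem pi_div_two_lt_branchHeight_mul (hn : 1 ≤ n) {κ : ℝ} (hκ : 0 < κ) :
    π / 2 < branchHeight μ0 n κ * κ := by
  rw [branchHeight, div_mul_cancel₀ _ hκ.ne']
  have : (1 : ℝ) ≤ n := by exact_mod_cast hn
  nlinarith [arctan_lt_pi_div_two (μ0 / κ), pi_pos]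

theorem branchHeight_pos (hn : 1 ≤ n) {κ : ℝ} (hκ : 0 < κ) : 0 < branchHeight μ0 n κ :=
  pos_of_mul_pos_left ((div_pos pi_pos two_pos).trans (pi_div_two_lt_branchHeight_mul hn hκ))
    hκ.le

theorem hasDerivAt_branchHeight {κ : ℝ} (hκ : κ ≠ 0) :
    HasDerivAt (branchHeight μ0 n) (-reducedHeight μ0 (branchHeight μ0 n κ) κ / κ) κ := by
  have hS : κ ^ 2 + μ0 ^ 2 ≠ 0 := by positivity
  have harctan := (hasDerivAt_arctan (μ0 / κ)).comp κ
    ((hasDerivAt_const κ μ0).div (hasDerivAt_id κ) hκ)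
  have h := ((hasDerivAt_const κ (n * π)).sub harctan).div (hasDerivAt_id κ) hκ
  refine h.congr_deriv ?_
  simp only [reducedHeight, branchHeight, id, Pi.sub_apply, Function.comp_apply]
  field_simp
  ring

theorem branchHeight_strictAntiOn (hμ0 : 0 < μ0) (hn : 1 ≤ n) :
    StrictAntiOn (branchHeight μ0 n) (Ioi 0) := by
  refine strictAntiOn_of_hasDerivWithinAt_neg (convex_Ioi 0)
    (fun κ hκ => (hasDerivAt_branchHeight (ne_of_gt hκ)).continuousAt.continuousWithinAt)
    (fun κ hκ => (hasDerivAt_branchHeight (ne_of_gt (interior_subset hκ))).hasDerivWithinAt)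
    fun κ hκ => ?_
  rw [interior_Ioi] at hκ
  have hE := two_mul_div_three_lt_reducedHeight hμ0 hκ
    (pi_div_two_lt_branchHeight_mul (μ0 := μ0) hn hκ)
  have hpos := branchHeight_pos (μ0 := μ0) hn hκ
  exact div_neg_of_neg_of_pos (by linarith) hκ

end


section Solution
variable {μ0 : ℝ} {n : ℕ} {k : ℝ → ℝ}

theorem hasDerivAt_reducedHeight (hμ0 : μ0 ≠ 0) {v x : ℝ} (hk : HasDerivAt k v x) :
    HasDerivAt (fun y => reducedHeight μ0 y (k y))
      (1 + 2 * μ0 * k x * v / (k x ^ 2 + μ0 ^ 2) ^ 2) x := by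
  have hS : k x ^ 2 + μ0 ^ 2 ≠ 0 := by positivity
  refine ((hasDerivAt_id x).sub
    ((hasDerivAt_const x μ0).div ((hk.pow 2).add_const (μ0 ^ 2)) hS)).congr_deriv ?_
  simp only [Pi.pow_apply, Nat.cast_ofNat]
  ring

theorem hasDerivAt_neg_div_reducedHeight (hμ0 : μ0 ≠ 0) {v x : ℝ} (hk : HasDerivAt k v x)
    (hE : reducedHeight μ0 x (k x) ≠ 0) :
    HasDerivAt (fun y => -k y / reducedHeight μ0 y (k y))
      ((k x * (1 + 2 * μ0 * k x * v / (k x ^ 2 + μ0 ^ 2) ^ 2) - v * reducedHeight μ0 x (k x)) /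
        reducedHeight μ0 x (k x) ^ 2) x :=
  (hk.neg.div (hasDerivAt_reducedHeight hμ0 hk) hE).congr_deriv <| by
    simp only [Pi.neg_apply]
    ring

variable (hn : 1 ≤ n) (hmaps : MapsTo k (Ioi 0) (Ioi 0))
  (hinv : RightInvOn k (branchHeight μ0 n) (Ioi 0))
include hn hmaps hinv

theorem pi_div_two_lt_mul_of_rightInvOn_branchHeight {x : ℝ} (hx : 0 < x) :
    π / 2 < x * k x := by
  simpa only [hinv hx] using pi_div_two_lt_branchHeight_mul (μ0 := μ0) hn (hmaps hx)

theorem two_mul_div_three_lt_reducedHeight_of_rightInvOn (hμ0 : 0 < μ0) {x : ℝ} (hx : 0 < x) :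
    2 * x / 3 < reducedHeight μ0 x (k x) :=
  two_mul_div_three_lt_reducedHeight hμ0 (hmaps hx)
    (pi_div_two_lt_mul_of_rightInvOn_branchHeight hn hmaps hinv hx)

theorem hasDerivAt_of_rightInvOn_branchHeight (hμ0 : 0 < μ0) {x : ℝ} (hx : 0 < x) :
    HasDerivAt k (-k x / reducedHeight μ0 x (k x)) x := by
  have hE := two_mul_div_three_lt_reducedHeight_of_rightInvOn hn hmaps hinv hμ0 hx
  have hcont : ContinuousAt k x :=
    continuousAt_of_rightInvOn_of_strictAntiOn (branchHeight_strictAntiOn hμ0 hn)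
      (fun _ => branchHeight_pos hn) hmaps hinv (Ioi_mem_nhds hx)
      (Ioi_mem_nhds (hmaps hx))
  have hd := hasDerivAt_branchHeight (μ0 := μ0) (n := n) (ne_of_gt (hmaps hx))
  rw [hinv hx] at hd
  have hinv' := hd.of_local_left_inverse hcont
    (div_ne_zero (neg_ne_zero.mpr (by linarith)) (ne_of_gt (hmaps hx)))
    (eventually_of_mem (Ioi_mem_nhds hx) fun y hy => hinv hy)
  rwa [inv_div, div_neg, ← neg_div] at hinv'

theorem hasDerivAt_deriv_of_rightInvOn_branchHeight (hμ0 : 0 < μ0) {x : ℝ} (hx : 0 < x) :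
    HasDerivAt (deriv k)
      (k x * (2 - 2 * μ0 * k x ^ 2 / (reducedHeight μ0 x (k x) * (k x ^ 2 + μ0 ^ 2) ^ 2)) /
        reducedHeight μ0 x (k x) ^ 2) x := by
  have hE := two_mul_div_three_lt_reducedHeight_of_rightInvOn hn hmaps hinv hμ0 hx
  have hderiv : deriv k =ᶠ[𝓝 x] fun y => -k y / reducedHeight μ0 y (k y) :=
    eventually_of_mem (Ioi_mem_nhds hx) fun y hy =>
      (hasDerivAt_of_rightInvOn_branchHeight hn hmaps hinv hμ0 hy).deriv
  refine ((hasDerivAt_neg_div_reducedHeight hμ0.ne'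
    (hasDerivAt_of_rightInvOn_branchHeight hn hmaps hinv hμ0 hx)
    (by linarith)).congr_of_eventuallyEq hderiv).congr_deriv ?_
  have hS : k x ^ 2 + μ0 ^ 2 ≠ 0 := by positivity
  have hE0 : reducedHeight μ0 x (k x) ≠ 0 := by linarith
  field_simp
  ring

end Solution

def IsDispersionBranch (μ0 : ℝ) (n : ℕ) (k : ℝ → ℝ) : Prop :=
  ∀ x : ℝ, 0 < x →
    k x ∈ Ioo ((2 * (n : ℝ) - 1) * π / (2 * x)) ((n : ℝ) * π / x) ∧
      μ0 + k x * tan (k x * x) = 0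

namespace IsDispersionBranch

variable {μ0 : ℝ} {n : ℕ} {k : ℝ → ℝ} (hk : IsDispersionBranch μ0 n k)
include hk

theorem lt_apply (hn : 1 ≤ n) {x : ℝ} (hx : 0 < x) : n * (π / (2 * x)) < k x := by
  refine lt_of_le_of_lt ?_ (hk x hx).1.1
  rw [mul_div_assoc']
  have : (1 : ℝ) ≤ n := by exact_mod_cast hn
  gcongr
  linarith

theorem apply_le {x : ℝ} (hx : 0 < x) : k x ≤ π / x * n := by
  rw [div_mul_eq_mul_div, mul_comm]
  exact (hk x hx).1.2.le

theorem mapsTo (hn : 1 ≤ n) : MapsTo k (Ioi 0) (Ioi 0) := fun _ hx =>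
  (mul_pos (Nat.cast_pos.mpr hn) (div_pos pi_pos (mul_pos two_pos hx))).trans (hk.lt_apply hn hx)

theorem rightInvOn (hμ0 : μ0 ≠ 0) : RightInvOn k (branchHeight μ0 n) (Ioi 0) := fun x hx =>
  branchHeight_eq_of_dispersion hμ0 hx (hk x hx).1 (hk x hx).2

theorem deriv_eq (hμ0 : 0 < μ0) (hn : 1 ≤ n) {x : ℝ} (hx : 0 < x) :
    deriv k x = -k x / reducedHeight μ0 x (k x) :=
  (hasDerivAt_of_rightInvOn_branchHeight hn (hk.mapsTo hn) (hk.rightInvOn hμ0.ne') hμ0 hx).deriv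

theorem deriv_div_self (hμ0 : 0 < μ0) (hn : 1 ≤ n) {x : ℝ} (hx : 0 < x) :
    deriv k x / k x = -1 / reducedHeight μ0 x (k x) := by
  rw [hk.deriv_eq hμ0 hn hx, neg_div, neg_div, neg_div,
    div_div_cancel_left' (ne_of_gt (hk.mapsTo hn hx)), one_div]

theorem abs_deriv_le (hμ0 : 0 < μ0) (hn : 1 ≤ n) {x : ℝ} (hx : 0 < x) :
    |deriv k x| ≤ 3 * π / (2 * x ^ 2) * n := by
  have hmaps := hk.mapsTo hn
  have hinv := hk.rightInvOn hμ0.ne'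
  rw [hk.deriv_eq hμ0 hn hx]
  calc _ ≤ 3 / (2 * x) * k x := abs_neg_div_reducedHeight_le hμ0 (hmaps hx)
        (pi_div_two_lt_mul_of_rightInvOn_branchHeight hn hmaps hinv hx)
    _ ≤ 3 / (2 * x) * (π / x * n) := by gcongr; exact hk.apply_le hx
    _ = 3 * π / (2 * x ^ 2) * n := by field_simp

theorem abs_deriv_deriv_le (hμ0 : 0 < μ0) (hn : 1 ≤ n) {x : ℝ} (hx : 0 < x) :
    |deriv (deriv k) x| ≤ 9 * π / (2 * x ^ 3) * n := by
  have hmaps := hk.mapsTo hn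
  have hinv := hk.rightInvOn hμ0.ne'
  rw [(hasDerivAt_deriv_of_rightInvOn_branchHeight hn hmaps hinv hμ0 hx).deriv]
  calc _ ≤ 9 / (2 * x ^ 2) * k x := abs_mul_two_sub_div_reducedHeight_sq_le hμ0 (hmaps hx)
        (pi_div_two_lt_mul_of_rightInvOn_branchHeight hn hmaps hinv hx)
    _ ≤ 9 / (2 * x ^ 2) * (π / x * n) := by gcongr; exact hk.apply_le hx
    _ = 9 * π / (2 * x ^ 3) * n := by field_simp

end IsDispersionBranch

/-- Asymptotic estimates of Proposition 1 (Eqs. (3.4), (3.5), (A8)):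
`(dkₙ/dH)/kₙ → −1/H` as `n → ∞`, and `|dkₙ/dH| ≤ C·n`, `|d²kₙ/dH²| ≤ C·n`. -/
theorem eigenvalue_derivative_asymptotics (μ0 H : ℝ) (hμ0 : 0 < μ0) (hH : 0 < H)
    (k : ℕ → ℝ → ℝ)
    (hk : ∀ n : ℕ, 1 ≤ n → ∀ H' : ℝ, 0 < H' →
      k n H' ∈ Set.Ioo ((2 * (n : ℝ) - 1) * π / (2 * H')) ((n : ℝ) * π / H') ∧
      μ0 + k n H' * Real.tan (k n H' * H') = 0) :
    Tendsto (fun n : ℕ => deriv (k n) H / k n H) atTop (nhds (-1 / H)) ∧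
    ∃ C : ℝ, 0 < C ∧ ∀ n : ℕ, 1 ≤ n →
      |deriv (k n) H| ≤ C * n ∧ |deriv (deriv (k n)) H| ≤ C * n := by
  have hbranch : ∀ n : ℕ, 1 ≤ n → IsDispersionBranch μ0 n (k n) := hk
  refine ⟨?_, 3 * π / (2 * H ^ 2) + 9 * π / (2 * H ^ 3), by positivity, fun n hn => ?_⟩
  · have hk_top : Tendsto (fun n => k n H) atTop atTop :=
      tendsto_atTop_mono' atTop
        (eventually_atTop.2 ⟨1, fun n hn => ((hbranch n hn).lt_apply hn hH).le⟩)
        (tendsto_natCast_atTop_atTop.atTop_mul_const (by positivity))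
    have hlim : Tendsto (fun n => -1 / reducedHeight μ0 H (k n H)) atTop (𝓝 (-1 / H)) :=
      tendsto_const_nhds.div (tendsto_reducedHeight H hk_top) hH.ne'
    exact hlim.congr' (eventually_atTop.2
      ⟨1, fun n hn => ((hbranch n hn).deriv_div_self hμ0 hn hH).symm⟩)
  · refine ⟨((hbranch n hn).abs_deriv_le hμ0 hn hH).trans ?_,
      ((hbranch n hn).abs_deriv_deriv_le hμ0 hn hH).trans ?_⟩
    · gcongr
      exact le_add_of_nonneg_right (by positivity)
    · gcongr
      exact le_add_of_nonneg_left (by positivity)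
end

section
/- Fix real constants μ0 > 0 and an integer n ≥ 1. For H > 0 let k_n(H) be the unique solution k of μ0 + k·tan(k·H) = 0 in ((2n−1)π/(2H), nπ/H), and for real h، η with η + h > 0 and z ∈ [−h, η] define Z_n(z; η, h) = cos(k_n(η+h)·(z+h))/cos(k_n(η+h)·(η+h)) and W_n(z; η, h) = sin(k_n(η+h)·(z+h))/cos(k_n(η+h)·(η+h)). Then, writing H = η + h, k_n = k_n(H) and k_n' = (dk_n/dH)(H), the partial derivatives of Z_n with respect to the boundary points exist and satisfy ∂Z_n/∂η = −k_n'·(z+h)·W_n + tan(k_n H)·(k_n'·H + k_n)·Z_n and ∂Z_n/∂h = −(k_n + k_n'·(z+h))·W_n + tan(k_n H)·(k_n'·H + k_n)·Z_n, where tan(k_n H) = −μ0/k_n. -/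
open Real Set Filter Topology

/-!
The product `θ(H) = kₙ(H)·H` lies in `((2n−1)π/2, nπ)`, where `cos` does not vanish, and solves
`θ tan θ = −μ₀ H`. On that interval `ψ(t) = t tan t` has derivative `(sin t cos t + t)/cos² t > 0`,
so `ψ` is injective there and the inverse function theorem makes `θ`, hence `kₙ = θ/H`,
differentiable. The two formulas are then the quotient and chain rules for `cos u / cos v`.
-/

lemma cos_ne_zero_of_mem_Ioo {n : ℤ} {t : ℝ}
    (ht : t ∈ Ioo ((2 * n - 1) * π / 2) ((2 * n + 1) * π / 2)) : cos t ≠ 0 := by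
  rw [Ne, cos_eq_zero_iff]
  rintro ⟨m, rfl⟩
  have hlo : (n : ℝ) - 1 < m := by nlinarith [ht.1, pi_pos]
  have hhi : (m : ℝ) < n := by nlinarith [ht.2, pi_pos]
  have : n - 1 < m ∧ m < n := ⟨by exact_mod_cast hlo, by exact_mod_cast hhi⟩
  omega

lemma hasStrictDerivAt_mul_tan {t : ℝ} (h : cos t ≠ 0) :
    HasStrictDerivAt (fun t => t * tan t) (tan t + t / cos t ^ 2) t :=
  ((hasStrictDerivAt_id t).mul (hasStrictDerivAt_tan h)).congr_deriv (by rw [id]; ring)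

lemma tan_add_div_cos_sq_pos {t : ℝ} (ht : 0 < t) (h : cos t ≠ 0) :
    0 < tan t + t / cos t ^ 2 := by
  have hsin : |sin t| < t := by simpa [abs_of_pos ht] using abs_sin_lt_abs ht.ne'
  have hsincos : |sin t * cos t| < t := by
    rw [abs_mul]
    exact (mul_le_of_le_one_right (abs_nonneg _) (abs_cos_le_one t)).trans_lt hsin
  have hnum : tan t + t / cos t ^ 2 = (sin t * cos t + t) / cos t ^ 2 := by
    rw [tan_eq_sin_div_cos]
    field_simp
  rw [hnum]
  exact div_pos (by linarith [neg_abs_le (sin t * cos t)]) (by positivity)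

lemma strictMonoOn_mul_tan {a b : ℝ} (ha : 0 ≤ a) (hcos : ∀ t ∈ Ioo a b, cos t ≠ 0) :
    StrictMonoOn (fun t => t * tan t) (Ioo a b) := by
  refine strictMonoOn_of_deriv_pos (convex_Ioo a b)
    (fun t ht => (hasStrictDerivAt_mul_tan (hcos t ht)).hasDerivAt.continuousAt.continuousWithinAt)
    fun t ht => ?_
  rw [interior_Ioo] at ht
  rw [(hasStrictDerivAt_mul_tan (hcos t ht)).hasDerivAt.deriv]
  exact tan_add_div_cos_sq_pos (ha.trans_lt ht.1) (hcos t ht)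

theorem HasStrictDerivAt.hasDerivAt_of_eventually_comp_eq {𝕜 : Type*}
    [NontriviallyNormedField 𝕜] [CompleteSpace 𝕜] {ψ θ F : 𝕜 → 𝕜} {ψ' F' x : 𝕜} {s : Set 𝕜}
    (hψ : HasStrictDerivAt ψ ψ' (θ x)) (hψ' : ψ' ≠ 0) (hs : IsOpen s) (hinj : InjOn ψ s)
    (hF : HasDerivAt F F' x) (hθ : ∀ᶠ y in 𝓝 x, θ y ∈ s ∧ ψ (θ y) = F y) :
    HasDerivAt θ (ψ'⁻¹ * F') x := by
  set g := hψ.localInverse ψ ψ' (θ x) hψ'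
  have hFx : F x = ψ (θ x) := hθ.self_of_nhds.2.symm
  have hF_tendsto : Tendsto F (𝓝 x) (𝓝 (ψ (θ x))) := hFx ▸ hF.continuousAt.tendsto
  have hg_tendsto : Tendsto (g ∘ F) (𝓝 x) (𝓝 (θ x)) :=
    (HasStrictFDerivAt.localInverse_tendsto _).comp hF_tendsto
  -- injectivity of `ψ` on `s`, not continuity of `θ`, is what pins `θ` to the local inverse
  have hθg : θ =ᶠ[𝓝 x] g ∘ F := by
    filter_upwards [hθ, hg_tendsto.eventually (hs.mem_nhds hθ.self_of_nhds.1),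
      hF_tendsto.eventually (hψ.eventually_right_inverse hψ')] with y ⟨hθy, hψθy⟩ hgy hψgy
    exact hinj hθy hgy (hψθy.trans hψgy.symm)
  exact ((hψ.to_localInverse hψ').hasDerivAt.comp_of_eq x hF hFx.symm).congr_of_eventuallyEq hθg

lemma differentiableAt_of_mul_mul_tan_eq {k : ℝ → ℝ} {a b c H₀ : ℝ} (ha : 0 ≤ a)
    (hcos : ∀ t ∈ Ioo a b, cos t ≠ 0) (hH₀ : H₀ ≠ 0)
    (hk : ∀ᶠ H in 𝓝 H₀, k H * H ∈ Ioo a b ∧ k H * H * tan (k H * H) = c * H) :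
    DifferentiableAt ℝ k H₀ := by
  have hθ₀ := hcos _ hk.self_of_nhds.1
  have hθ : DifferentiableAt ℝ (fun H => k H * H) H₀ :=
    ((hasStrictDerivAt_mul_tan hθ₀).hasDerivAt_of_eventually_comp_eq (θ := fun H => k H * H)
      (tan_add_div_cos_sq_pos (ha.trans_lt hk.self_of_nhds.1.1) hθ₀).ne' isOpen_Ioo
      (strictMonoOn_mul_tan ha hcos).injOn ((hasDerivAt_id H₀).const_mul c) hk).differentiableAt
  refine (hθ.div differentiableAt_id hH₀).congr_of_eventuallyEq ?_
  filter_upwards [eventually_ne_nhds hH₀] with H hH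
  simp [hH]

theorem hasDerivAt_cos_div_cos {u v : ℝ → ℝ} {u' v' x : ℝ} (hu : HasDerivAt u u' x)
    (hv : HasDerivAt v v' x) (hc : cos (v x) ≠ 0) :
    HasDerivAt (fun y => cos (u y) / cos (v y))
      (-u' * (sin (u x) / cos (v x)) + tan (v x) * v' * (cos (u x) / cos (v x))) x := by
  refine (hu.cos.div hv.cos hc).congr_deriv ?_
  rw [tan_eq_sin_div_cos]
  field_simp
  ring

theorem eigenfunction_shape_derivatives_general (μ0 : ℝ) (n : ℕ) (hn : 1 ≤ n)
    (k : ℝ → ℝ)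
    (hk : ∀ H : ℝ, 0 < H →
      k H ∈ Set.Ioo ((2 * (n : ℝ) - 1) * π / (2 * H)) ((n : ℝ) * π / H) ∧
      μ0 + k H * Real.tan (k H * H) = 0)
    (h η : ℝ) (hH : 0 < η + h) (z : ℝ) :
    Real.tan (k (η + h) * (η + h)) = -μ0 / k (η + h) ∧
    HasDerivAt
      (fun η' : ℝ =>
        Real.cos (k (η' + h) * (z + h)) / Real.cos (k (η' + h) * (η' + h)))
      (-(deriv k (η + h)) * (z + h) *
          (Real.sin (k (η + h) * (z + h)) / Real.cos (k (η + h) * (η + h))) +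
        Real.tan (k (η + h) * (η + h)) * (deriv k (η + h) * (η + h) + k (η + h)) *
          (Real.cos (k (η + h) * (z + h)) / Real.cos (k (η + h) * (η + h)))) η ∧
    HasDerivAt
      (fun h' : ℝ =>
        Real.cos (k (η + h') * (z + h')) / Real.cos (k (η + h') * (η + h')))
      (-(k (η + h) + deriv k (η + h) * (z + h)) *
          (Real.sin (k (η + h) * (z + h)) / Real.cos (k (η + h) * (η + h))) +
        Real.tan (k (η + h) * (η + h)) * (deriv k (η + h) * (η + h) + k (η + h)) *
          (Real.cos (k (η + h) * (z + h)) / Real.cos (k (η + h) * (η + h)))) h := by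
  have hn' : (1 : ℝ) ≤ n := by exact_mod_cast hn
  have ha : 0 ≤ (2 * (n : ℝ) - 1) * π / 2 :=
    div_nonneg (mul_nonneg (by linarith) pi_pos.le) zero_le_two
  have hcos : ∀ t ∈ Ioo ((2 * (n : ℝ) - 1) * π / 2) (n * π), cos t ≠ 0 := fun t ht =>
    cos_ne_zero_of_mem_Ioo (n := n) ⟨by exact_mod_cast ht.1, by push_cast; linarith [ht.2, pi_pos]⟩
  have hθ : ∀ H, 0 < H → k H * H ∈ Ioo ((2 * (n : ℝ) - 1) * π / 2) (n * π) ∧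
      k H * H * tan (k H * H) = -μ0 * H := by
    intro H hH
    obtain ⟨⟨hlo, hhi⟩, heq⟩ := hk H hH
    rw [div_lt_iff₀ (by positivity)] at hlo
    rw [lt_div_iff₀ hH] at hhi
    exact ⟨⟨by linarith, hhi⟩, by linear_combination H * heq⟩
  have hk₀ : 0 < k (η + h) := pos_of_mul_pos_left (ha.trans_lt (hθ _ hH).1.1) hH.le
  have hk' : HasDerivAt k (deriv k (η + h)) (η + h) :=
    (differentiableAt_of_mul_mul_tan_eq ha hcos hH.ne'
      ((eventually_gt_nhds hH).mono fun H hH => hθ H hH)).hasDerivAt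
  have hc : cos (k (η + h) * (η + h)) ≠ 0 := hcos _ (hθ _ hH).1
  have hkH : HasDerivAt (fun H => k H * H) (deriv k (η + h) * (η + h) + k (η + h)) (η + h) :=
    (hk'.mul (hasDerivAt_id' _)).congr_deriv (by ring)
  refine ⟨?_, ?_, ?_⟩
  · rw [eq_div_iff hk₀.ne']
    linear_combination (hk _ hH).2
  · have hu : HasDerivAt (fun η' => k (η' + h) * (z + h)) (deriv k (η + h) * (z + h)) η :=
      (hk'.comp_add_const η h).mul_const (z + h)
    exact (hasDerivAt_cos_div_cos hu (hkH.comp_add_const η h) hc).congr_deriv (by ring)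
  · have hu : HasDerivAt (fun h' => k (η + h') * (z + h'))
        (deriv k (η + h) * (z + h) + k (η + h)) h :=
      ((hk'.comp_const_add η h).mul ((hasDerivAt_id' h).const_add z)).congr_deriv (by ring)
    exact (hasDerivAt_cos_div_cos hu (hkH.comp_const_add η h) hc).congr_deriv (by ring)

/-- Fréchet (shape) derivative formulas (A16), (A17) of Proposition 2: the derivatives
of `Zₙ(z; η, h) = cos(kₙ(z+h))/cos(kₙH)` with respect to the boundary points `η` and `h`
exist and equal `−kₙ'(z+h)Wₙ + tan(kₙH)(kₙ'H + kₙ)Zₙ` and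
`−(kₙ + kₙ'(z+h))Wₙ + tan(kₙH)(kₙ'H + kₙ)Zₙ`, with `tan(kₙH) = −μ₀/kₙ`. -/
theorem eigenfunction_shape_derivatives (μ0 : ℝ) (hμ0 : 0 < μ0) (n : ℕ) (hn : 1 ≤ n)
    (k : ℝ → ℝ)
    (hk : ∀ H : ℝ, 0 < H →
      k H ∈ Set.Ioo ((2 * (n : ℝ) - 1) * π / (2 * H)) ((n : ℝ) * π / H) ∧
      μ0 + k H * Real.tan (k H * H) = 0)
    (h η : ℝ) (hH : 0 < η + h) (z : ℝ) (hz : z ∈ Set.Icc (-h) η) :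
    Real.tan (k (η + h) * (η + h)) = -μ0 / k (η + h) ∧
    HasDerivAt
      (fun η' : ℝ =>
        Real.cos (k (η' + h) * (z + h)) / Real.cos (k (η' + h) * (η' + h)))
      (-(deriv k (η + h)) * (z + h) *
          (Real.sin (k (η + h) * (z + h)) / Real.cos (k (η + h) * (η + h))) +
        Real.tan (k (η + h) * (η + h)) * (deriv k (η + h) * (η + h) + k (η + h)) *
          (Real.cos (k (η + h) * (z + h)) / Real.cos (k (η + h) * (η + h)))) η ∧
    HasDerivAt
      (fun h' : ℝ =>
        Real.cos (k (η + h') * (z + h')) / Real.cos (k (η + h') * (η + h')))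
      (-(k (η + h) + deriv k (η + h) * (z + h)) *
          (Real.sin (k (η + h) * (z + h)) / Real.cos (k (η + h) * (η + h))) +
        Real.tan (k (η + h) * (η + h)) * (deriv k (η + h) * (η + h) + k (η + h)) *
          (Real.cos (k (η + h) * (z + h)) / Real.cos (k (η + h) * (η + h)))) h :=
  eigenfunction_shape_derivatives_general μ0 n hn k hk h η hH z
end

section
/- Fix real constants μ0 > 0 and H > 0, and real numbers h, η with η + h = H. For n ≥ 1 let k_n be the unique solution k of μ0 + k·tan(k·H) = 0 in ((2n−1)π/(2H), nπ/H), and set Z_n(z) = cos(k_n(z+h))/cos(k_n H) on [−h, η]. Then for every twice continuously differentiable function F : [−h, η] → ℝ there exists a constant C > 0 (depending on F, μ0, H but not on n) such that |∫_{−h}^{η} F(z)·Z_n(z) dz| ≤ C·n^{−2} for all n ≥ 1. -/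
open Real MeasureTheory intervalIntegral

/-!
Since `Zₙ'' = -kₙ² Zₙ`, integrating by parts twice (Green's identity) expresses `kₙ² ∫ F Zₙ`
through the boundary values `Zₙ(η) = 1`, `Zₙ'(η) = μ0`, `Zₙ'(-h) = 0`, `Zₙ(-h) = sec (kₙ H)`
and the integral `∫ F'' Zₙ`. The dispersion relation gives `sec² (kₙ H) = 1 + μ0² / kₙ²`, so
`|Zₙ| ≤ |sec (kₙ H)|` is bounded uniformly in `n`, and `kₙ ≥ n π / (2 H)` turns the resulting
`O(kₙ⁻²)` bound into `O(n⁻²)`.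
-/

open Set Topology

theorem mul_integral_mul_eq_of_hasDerivAt_eq_mul {a b c : ℝ} {F Z Z' : ℝ → ℝ} (hab : a < b)
    (hF : ContDiffOn ℝ 2 F (Icc a b)) (hZ : ∀ x, HasDerivAt Z (Z' x) x)
    (hZ' : ∀ x, HasDerivAt Z' (c * Z x) x) :
    c * ∫ x in a..b, F x * Z x =
      (F b * Z' b - derivWithin F (Icc a b) b * Z b)
        - (F a * Z' a - derivWithin F (Icc a b) a * Z a)
        + ∫ x in a..b, derivWithin (derivWithin F (Icc a b)) (Icc a b) x * Z x := by
  set s := Icc a b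
  set F' := derivWithin F s
  set F'' := derivWithin F' s
  have hs : UniqueDiffOn ℝ s := uniqueDiffOn_Icc hab
  have hF' : ContDiffOn ℝ 1 F' s := hF.derivWithin hs (by norm_num)
  have hZc : Continuous Z := continuous_iff_continuousAt.2 fun x => (hZ x).continuousAt
  have hZ'c : Continuous Z' := continuous_iff_continuousAt.2 fun x => (hZ' x).continuousAt
  have hFZ : IntervalIntegrable (fun x => F x * Z x) volume a b :=
    (hF.continuousOn.mul hZc.continuousOn).intervalIntegrable_of_Icc hab.le
  have hF''Z : IntervalIntegrable (fun x => F'' x * Z x) volume a b :=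
    ((hF'.continuousOn_derivWithin hs le_rfl).mul hZc.continuousOn).intervalIntegrable_of_Icc
      hab.le
  have hWronskian : ∫ x in a..b, (c * (F x * Z x) - F'' x * Z x) =
      (F b * Z' b - F' b * Z b) - (F a * Z' a - F' a * Z a) := by
    refine integral_eq_sub_of_hasDeriv_right_of_le hab.le
      ((hF.continuousOn.mul hZ'c.continuousOn).sub (hF'.continuousOn.mul hZc.continuousOn))
      (fun x hx => ?_) ((hFZ.const_mul c).sub hF''Z)
    have hxs : s ∈ 𝓝 x := Icc_mem_nhds hx.1 hx.2
    have hxs' : x ∈ s := Ioo_subset_Icc_self hx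
    have hFx : HasDerivAt F (F' x) x :=
      ((hF.differentiableOn two_ne_zero) x hxs').hasDerivWithinAt.hasDerivAt hxs
    have hF'x : HasDerivAt F' (F'' x) x :=
      ((hF'.differentiableOn one_ne_zero) x hxs').hasDerivWithinAt.hasDerivAt hxs
    refine (((hFx.mul (hZ' x)).sub (hF'x.mul (hZ x))).congr_deriv ?_).hasDerivWithinAt
    ring
  rw [integral_sub (hFZ.const_mul c) hF''Z, intervalIntegral.integral_const_mul] at hWronskian
  linarith

theorem abs_integral_mul_le_of_abs_le {a b M A : ℝ} {f g : ℝ → ℝ} (hab : a ≤ b)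
    (hf : ∀ x ∈ Icc a b, |f x| ≤ M) (hg : ∀ x ∈ Icc a b, |g x| ≤ A) :
    |∫ x in a..b, f x * g x| ≤ M * A * (b - a) := by
  have hbound : ∀ x ∈ uIoc a b, ‖f x * g x‖ ≤ M * A := fun x hx => by
    have hx' : x ∈ Icc a b := Ioc_subset_Icc_self ((uIoc_of_le hab) ▸ hx)
    rw [Real.norm_eq_abs, abs_mul]
    exact mul_le_mul (hf x hx') (hg x hx') (abs_nonneg _) ((abs_nonneg _).trans (hf x hx'))
  simpa [abs_of_nonneg (sub_nonneg.2 hab)] using norm_integral_le_of_norm_le_const hbound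

theorem natCast_mul_pi_div_le_of_lt {n : ℕ} {H K : ℝ} (hn : 1 ≤ n) (hH : 0 < H)
    (hK : (2 * (n : ℝ) - 1) * π / (2 * H) < K) : n * (π / (2 * H)) ≤ K := by
  have hn' : (n : ℝ) ≤ 2 * n - 1 := by
    have : (1 : ℝ) ≤ n := by exact_mod_cast hn
    linarith
  rw [← mul_div_assoc]
  exact (div_le_div_of_nonneg_right (mul_le_mul_of_nonneg_right hn' pi_pos.le)
    (by positivity)).trans hK.le

theorem le_div_sq_div_sq_of_sq_mul_le {x B c K n : ℝ} (hc : 0 < c) (hn : 0 < n)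
    (hK : n * c ≤ K) (hx : 0 ≤ x) (hKx : K ^ 2 * x ≤ B) : x ≤ B / c ^ 2 / n ^ 2 := by
  rw [div_div, le_div_iff₀ (by positivity)]
  have : (n * c) ^ 2 ≤ K ^ 2 := pow_le_pow_left₀ (by positivity) hK 2
  nlinarith

section Dispersion

variable {μ0 H K : ℝ}

theorem cos_ne_zero_of_add_mul_tan_eq_zero (hμ0 : μ0 ≠ 0) (hK : μ0 + K * tan (K * H) = 0) :
    cos (K * H) ≠ 0 := by
  intro hcos
  rw [tan_eq_sin_div_cos, hcos, div_zero, mul_zero, add_zero] at hK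
  exact hμ0 hK

theorem abs_inv_cos_le_of_add_mul_tan_eq_zero (hμ0 : 0 < μ0) (hK0 : 0 < K)
    (hK : μ0 + K * tan (K * H) = 0) : |cos (K * H)|⁻¹ ≤ 1 + μ0 / K := by
  have hcos := cos_ne_zero_of_add_mul_tan_eq_zero hμ0.ne' hK
  have htan : tan (K * H) = -(μ0 / K) := by field_simp; linarith
  have hsec : (|cos (K * H)|⁻¹) ^ 2 = 1 + (μ0 / K) ^ 2 := by
    rw [inv_pow, sq_abs, ← inv_one_add_tan_sq hcos, inv_inv, htan, neg_sq]
  rw [← pow_le_pow_iff_left₀ (by positivity) (by positivity) two_ne_zero, hsec]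
  nlinarith [div_pos hμ0 hK0]

end Dispersion

noncomputable def waveguideMode (K H h z : ℝ) : ℝ := cos (K * (z + h)) / cos (K * H)

section WaveguideMode

variable {K H h : ℝ}

theorem hasDerivAt_waveguideMode (z : ℝ) :
    HasDerivAt (waveguideMode K H h) (-K * sin (K * (z + h)) / cos (K * H)) z := by
  have hlin : HasDerivAt (fun z => K * (z + h)) K z := by
    simpa using ((hasDerivAt_id z).add_const h).const_mul K
  exact (hlin.cos.div_const _).congr_deriv (by ring)

theorem hasDerivAt_deriv_waveguideMode (z : ℝ) :
    HasDerivAt (fun z => -K * sin (K * (z + h)) / cos (K * H))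
      (-K ^ 2 * waveguideMode K H h z) z := by
  have hlin : HasDerivAt (fun z => K * (z + h)) K z := by
    simpa using ((hasDerivAt_id z).add_const h).const_mul K
  exact ((hlin.sin.const_mul (-K)).div_const _).congr_deriv (by rw [waveguideMode]; ring)

theorem abs_waveguideMode_le (z : ℝ) : |waveguideMode K H h z| ≤ |cos (K * H)|⁻¹ := by
  rw [waveguideMode, abs_div, div_eq_mul_inv]
  exact mul_le_of_le_one_left (inv_nonneg.2 (abs_nonneg _)) (abs_cos_le_one _)

end WaveguideMode

theorem sq_mul_abs_integral_mul_waveguideMode_le {μ0 H h η K M : ℝ} {F : ℝ → ℝ}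
    (hμ0 : 0 < μ0) (hH : 0 < H) (hηh : η + h = H)
    (hK : μ0 + K * tan (K * H) = 0) (hF : ContDiffOn ℝ 2 F (Icc (-h) η))
    (hM : ∀ x ∈ Icc (-h) η,
      |derivWithin (derivWithin F (Icc (-h) η)) (Icc (-h) η) x| ≤ M) :
    K ^ 2 * |∫ z in (-h)..η, F z * waveguideMode K H h z| ≤
      μ0 * |F η| + |derivWithin F (Icc (-h) η) η| +
        |cos (K * H)|⁻¹ * (|derivWithin F (Icc (-h) η) (-h)| + M * H) := by
  have hcos := cos_ne_zero_of_add_mul_tan_eq_zero hμ0.ne' hK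
  have hgreen := mul_integral_mul_eq_of_hasDerivAt_eq_mul (by linarith) hF
    (hasDerivAt_waveguideMode (K := K) (H := H) (h := h))
    (hasDerivAt_deriv_waveguideMode (K := K) (H := H) (h := h))
  have hZη : waveguideMode K H h η = 1 := by rw [waveguideMode, hηh, div_self hcos]
  have hZ'η : -K * sin (K * (η + h)) / cos (K * H) = μ0 := by
    rw [hηh, mul_div_assoc, ← tan_eq_sin_div_cos]; linarith
  have hZ'h : -K * sin (K * (-h + h)) / cos (K * H) = 0 := by simp
  rw [hZη, hZ'η, hZ'h] at hgreen
  have hrest := abs_integral_mul_le_of_abs_le (by linarith) hM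
    (fun z _ => abs_waveguideMode_le (K := K) (H := H) (h := h) z)
  rw [show η - -h = H by linarith] at hrest
  have hZh : |derivWithin F (Icc (-h) η) (-h) * waveguideMode K H h (-h)| ≤
      |derivWithin F (Icc (-h) η) (-h)| * |cos (K * H)|⁻¹ := by
    rw [abs_mul]; exact mul_le_mul_of_nonneg_left (abs_waveguideMode_le _) (abs_nonneg _)
  rw [← abs_of_nonneg (sq_nonneg K), ← abs_mul, ← abs_neg, ← neg_mul, hgreen]
  refine abs_le.2 ⟨?_, ?_⟩ <;> nlinarith [abs_le.1 hrest, abs_le.1 hZh, le_abs_self (F η),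
    neg_abs_le (F η), le_abs_self (derivWithin F (Icc (-h) η) η),
    neg_abs_le (derivWithin F (Icc (-h) η) η)]

/-- Assertion (i) of Lemma 2 (Eq. (4.8a)): for any C² function `F` on `[−h, η]`,
`|∫ F·Zₙ| ≤ C·n⁻²`. -/
theorem integral_against_Zn_decay (μ0 H h η : ℝ) (hμ0 : 0 < μ0) (hH : 0 < H)
    (hηh : η + h = H)
    (k : ℕ → ℝ)
    (hk : ∀ n : ℕ, 1 ≤ n →
      k n ∈ Set.Ioo ((2 * (n : ℝ) - 1) * π / (2 * H)) ((n : ℝ) * π / H) ∧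
      μ0 + k n * Real.tan (k n * H) = 0)
    (F : ℝ → ℝ) (hF : ContDiffOn ℝ 2 F (Set.Icc (-h) η)) :
    ∃ C : ℝ, 0 < C ∧ ∀ n : ℕ, 1 ≤ n →
      |∫ z in (-h)..η, F z * (Real.cos (k n * (z + h)) / Real.cos (k n * H))| ≤
        C / (n : ℝ) ^ 2 := by
  set s := Icc (-h) η
  have hs : UniqueDiffOn ℝ s := uniqueDiffOn_Icc (by linarith)
  obtain ⟨M, hM⟩ := isCompact_Icc.exists_bound_of_continuousOn
    ((hF.derivWithin hs (m := 1) (by norm_num)).continuousOn_derivWithin hs le_rfl)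
  have hM0 : 0 ≤ M := (norm_nonneg _).trans (hM η (right_mem_Icc.2 (by linarith)))
  set c := π / (2 * H)
  have hc : 0 < c := by positivity
  set B := μ0 * |F η| + |derivWithin F s η| + (1 + μ0 / c) * (|derivWithin F s (-h)| + M * H)
  have hB : 0 ≤ B := by positivity
  refine ⟨B / c ^ 2 + 1, by positivity, fun n hn => ?_⟩
  obtain ⟨⟨hkn, -⟩, hdisp⟩ := hk n hn
  have hn0 : (0 : ℝ) < n := by exact_mod_cast hn
  have hck : n * c ≤ k n := natCast_mul_pi_div_le_of_lt hn hH hkn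
  have hk0 : 0 < k n := (mul_pos hn0 hc).trans_le hck
  have hsec : |cos (k n * H)|⁻¹ ≤ 1 + μ0 / c := by
    refine (abs_inv_cos_le_of_add_mul_tan_eq_zero hμ0 hk0 hdisp).trans ?_
    gcongr
    exact (le_mul_of_one_le_left hc.le (by exact_mod_cast hn)).trans hck
  have hKI : k n ^ 2 * |∫ z in (-h)..η, F z * waveguideMode (k n) H h z| ≤ B :=
    (sq_mul_abs_integral_mul_waveguideMode_le hμ0 hH hηh hdisp hF hM).trans
      (add_le_add_right (mul_le_mul_of_nonneg_right hsec (by positivity)) _)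
  calc _ = |∫ z in (-h)..η, F z * waveguideMode (k n) H h z| := rfl
    _ ≤ B / c ^ 2 / n ^ 2 := le_div_sq_div_sq_of_sq_mul_le hc hn0 hck (abs_nonneg _) hKI
    _ ≤ _ := by gcongr; linarith
end
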